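/- arXiv:1310.7873 — 10 statements merged into one kernel-verified Lean document; each statement's English description precedes it below -/
import Mathlib

section
/- Let R be a unique factorization domain that is also a ℂ-algebra, let g₁, …, g_ℓ ∈ R be pairwise non-associated irreducible elements, let k₁, …, k_ℓ ≥ 1 be integers, let u ∈ R be a unit, and set g = u·g₁^{k₁}⋯g_ℓ^{k_ℓ}. Then for every derivation D ∈ Derivation ℂ R R one has D g ∈ Ideal.span {g} if and only if D gᵢ ∈ Ideal.span {gᵢ} for every i = 1, …, ℓ. In other words, Der(−log g) = ⋂ᵢ Der(−log gᵢ). -/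
/-!
A derivation satisfies `D (a * b) = a D b + b D a`, so divisibility `a ∣ D a` is stable under
products, powers and associates; this gives `⇐`. Conversely, write `G ~ gᵢ ^ (m + 1) * q` with
`gᵢ ∤ q`. Then `gᵢ ^ (m + 1)` divides
`D (gᵢ ^ (m + 1) q) = gᵢ ^ (m + 1) D q + (m + 1) gᵢ ^ m q D gᵢ`, so `gᵢ ∣ (m + 1) q D gᵢ`;
since `gᵢ` is prime, `gᵢ ∤ q` and `m + 1` is a unit in a `ℂ`-algebra, `gᵢ ∣ D gᵢ`.
-/

open Finset

namespace Derivation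

section CommSemiring

variable {S A : Type*} [CommSemiring S] [CommSemiring A] [Algebra S A] (D : Derivation S A A)

theorem mul_dvd_map_mul {a b : A} (ha : a ∣ D a) (hb : b ∣ D b) : a * b ∣ D (a * b) := by
  rw [D.leibniz, smul_eq_mul, smul_eq_mul]
  exact dvd_add (mul_dvd_mul_left a hb) (mul_comm b a ▸ mul_dvd_mul_left b ha)

theorem pow_dvd_map_pow {a : A} (ha : a ∣ D a) (n : ℕ) : a ^ n ∣ D (a ^ n) := by
  induction n with
  | zero => simp
  | succ n ih => rw [pow_succ]; exact D.mul_dvd_map_mul ih ha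

theorem prod_dvd_map_prod {ι : Type*} {s : Finset ι} {f : ι → A}
    (h : ∀ i ∈ s, f i ∣ D (f i)) : ∏ i ∈ s, f i ∣ D (∏ i ∈ s, f i) :=
  prod_induction f (fun x => x ∣ D x) (fun _ _ => D.mul_dvd_map_mul) (by simp) h

end CommSemiring

section CommRing

variable {S A : Type*} [CommSemiring S] [CommRing A] [Algebra S A] (D : Derivation S A A)

theorem dvd_map_self_iff_of_associated {a b : A} (h : Associated a b) :
    a ∣ D a ↔ b ∣ D b := by
  obtain ⟨u, rfl⟩ := h
  rw [← (associated_mul_unit_right a _ u.isUnit).dvd_iff_dvd_left, D.leibniz, smul_eq_mul,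
    smul_eq_mul, dvd_add_right (dvd_mul_right a _), Units.dvd_mul_left]

theorem dvd_map_of_pow_succ_dvd_map_pow_succ_mul [IsDomain A] {p q : A} {m : ℕ} (hp : Prime p)
    (hq : ¬p ∣ q) (hm : ¬p ∣ ((m + 1 : ℕ) : A)) (h : p ^ (m + 1) ∣ D (p ^ (m + 1) * q)) :
    p ∣ D p := by
  have hD : D (p ^ (m + 1) * q) = p ^ (m + 1) * D q + p ^ m * (q * (m + 1 : ℕ) * D p) := by
    rw [D.leibniz, D.leibniz_pow]
    simp only [smul_eq_mul, nsmul_eq_mul, Nat.add_sub_cancel]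
    ring
  rw [hD, dvd_add_right (dvd_mul_right _ _), pow_succ,
    mul_dvd_mul_iff_left (pow_ne_zero m hp.ne_zero)] at h
  rcases hp.dvd_or_dvd h with h | h
  · rcases hp.dvd_or_dvd h with h | h
    exacts [absurd h hq, absurd h hm]
  · exact h

end CommRing

end Derivation

theorem isUnit_natCast_succ {K A : Type*} [Field K] [CharZero K] [Semiring A] [Algebra K A]
    (n : ℕ) : IsUnit ((n + 1 : ℕ) : A) := by
  rw [← map_natCast (algebraMap K A)]
  exact (isUnit_iff_ne_zero.2 (Nat.cast_ne_zero.2 n.succ_ne_zero)).map _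

/-- For a UFD `R` that is a `ℂ`-algebra and `g = u * ∏ i, g i ^ k i` with `u` a unit and the
`g i` pairwise non-associated irreducible elements, a derivation `D` is logarithmic along `g`
(i.e. `D g ∈ (g)`) if and only if it is logarithmic along every `g i`. -/
theorem derivation_log_prod_pow_iff_forall
    {R : Type*} [CommRing R] [IsDomain R] [UniqueFactorizationMonoid R] [Algebra ℂ R]
    {ℓ : ℕ} (g : Fin ℓ → R) (k : Fin ℓ → ℕ)
    (hirr : ∀ i, Irreducible (g i))
    (hassoc : ∀ i j, i ≠ j → ¬ Associated (g i) (g j))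
    (hk : ∀ i, 1 ≤ k i)
    (u : Rˣ) (G : R) (hG : G = (u : R) * ∏ i, g i ^ k i)
    (D : Derivation ℂ R R) :
    D G ∈ Ideal.span {G} ↔ ∀ i, D (g i) ∈ Ideal.span {g i} := by
  simp only [Ideal.mem_span_singleton]
  rw [← D.dvd_map_self_iff_of_associated (hG ▸ associated_unit_mul_right _ _ u.isUnit)]
  refine ⟨fun h i => ?_, fun h => D.prod_dvd_map_prod fun i _ => D.pow_dvd_map_pow (h i) (k i)⟩
  have hprime : Prime (g i) := UniqueFactorizationMonoid.irreducible_iff_prime.1 (hirr i)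
  obtain ⟨m, hm⟩ := Nat.exists_eq_add_of_le' (hk i)
  refine D.dvd_map_of_pow_succ_dvd_map_pow_succ_mul hprime (m := m)
    (q := ∏ j ∈ univ.erase i, g j ^ k j) ?_ ?_ ?_
  · refine hprime.not_dvd_finsetProd fun j hj hdvd => hassoc i j (ne_of_mem_erase hj).symm ?_
    exact (hirr i).associated_of_dvd (hirr j) (hprime.dvd_of_dvd_pow hdvd)
  · exact fun hdvd =>
      (hirr i).not_isUnit (isUnit_of_dvd_unit hdvd (isUnit_natCast_succ (K := ℂ) m))
  · rw [← hm, mul_prod_erase univ (fun j => g j ^ k j) (mem_univ i)]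
    exact (dvd_prod_of_mem _ (mem_univ i)).trans h
end

section
/- Let R be a unique factorization domain that is also a ℂ-algebra, let g₁, …, g_ℓ ∈ R be pairwise non-associated irreducible elements, let k₁, …, k_ℓ ≥ 1 be integers, let u ∈ R be a unit, and set g = u·g₁^{k₁}⋯g_ℓ^{k_ℓ}. Then for every derivation D ∈ Derivation ℂ R R one has D g ∈ Ideal.span {g} if and only if D(g₁⋯g_ℓ) ∈ Ideal.span {g₁⋯g_ℓ}; that is, Der(−log g) = Der(−log g₁⋯g_ℓ), so the module of logarithmic derivations of g coincides with that of its reduction. -/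
/-!
A derivation `D` is logarithmic along `a` when `a ∣ D a`. This property is closed under products
and powers, which gives one direction. Conversely, if `g ^ k * c` is logarithmic with `g` prime,
`g ∤ c` and `k` invertible, then the Leibniz rule shows that `g ^ k` divides
`k * g ^ (k - 1) * c * D g`, and cancelling `g ^ (k - 1)` leaves `g ∣ D g`. Hence `u * ∏ gᵢ ^ kᵢ` is
logarithmic if and only if every `gᵢ` is, a condition that does not depend on the exponents.
-/

namespace Derivation

variable {A R : Type*} [CommSemiring A] [CommRing R] [Algebra A R] (D : Derivation A R R)

theorem mul_dvd_apply_mul {a b : R} (ha : a ∣ D a) (hb : b ∣ D b) : a * b ∣ D (a * b) := by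
  rw [leibniz, smul_eq_mul, smul_eq_mul]
  exact dvd_add (mul_dvd_mul_left a hb) (mul_comm b a ▸ mul_dvd_mul_left b ha)

theorem prod_dvd_apply_prod {ι : Type*} (s : Finset ι) (f : ι → R)
    (hf : ∀ i ∈ s, f i ∣ D (f i)) : (∏ i ∈ s, f i) ∣ D (∏ i ∈ s, f i) :=
  Finset.prod_induction f (fun a => a ∣ D a) (fun _ _ => D.mul_dvd_apply_mul)
    (by simp) hf

theorem pow_dvd_apply_pow {a : R} (ha : a ∣ D a) (n : ℕ) : a ^ n ∣ D (a ^ n) := by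
  simpa using D.prod_dvd_apply_prod (Finset.range n) (fun _ => a) (fun _ _ => ha)

theorem units_mul_dvd_apply_units_mul_iff (u : Rˣ) (a : R) :
    (u : R) * a ∣ D (u * a) ↔ a ∣ D a := by
  rw [leibniz, smul_eq_mul, smul_eq_mul, Units.mul_left_dvd,
    dvd_add_left (dvd_mul_right _ _), Units.dvd_mul_left]

theorem dvd_apply_of_pow_mul_dvd_apply [IsDomain R] {p c : R} {k : ℕ} (hp : Prime p)
    (hk : IsUnit (k : R)) (hc : ¬ p ∣ c) (h : p ^ k ∣ D (p ^ k * c)) : p ∣ D p := by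
  obtain ⟨n, rfl⟩ : ∃ n, k = n + 1 :=
    Nat.exists_eq_add_one.mpr (Nat.pos_of_ne_zero fun h0 => by simp [h0] at hk)
  have hterm : p ^ n * p ∣ p ^ n * ((n + 1 : ℕ) * c * D p) := by
    rw [leibniz, smul_eq_mul, dvd_add_right (dvd_mul_right _ _), leibniz_pow] at h
    convert h using 1
    · rw [pow_succ]
    · simp only [nsmul_eq_mul, smul_eq_mul, add_tsub_cancel_right]
      ring
  have hdvd := (mul_dvd_mul_iff_left (pow_ne_zero n hp.ne_zero)).mp hterm
  rcases hp.dvd_mul.mp hdvd with hdvd | hdvd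
  · rcases hp.dvd_mul.mp hdvd with hdvd | hdvd
    · exact absurd (isUnit_of_dvd_unit hdvd hk) hp.not_isUnit
    · exact absurd hdvd hc
  · exact hdvd

theorem prod_pow_dvd_apply_prod_pow_iff [IsDomain R] {ι : Type*} [Fintype ι] (g : ι → R)
    (k : ι → ℕ) (hp : ∀ i, Prime (g i)) (hassoc : Pairwise fun i j => ¬ Associated (g i) (g j))
    (hk : ∀ i, IsUnit (k i : R)) :
    (∏ i, g i ^ k i) ∣ D (∏ i, g i ^ k i) ↔ ∀ i, g i ∣ D (g i) := by
  classical
  refine ⟨fun h i => ?_, fun h => D.prod_dvd_apply_prod _ _ fun i _ => D.pow_dvd_apply_pow (h i) _⟩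
  have hcoprime : ¬ g i ∣ ∏ j ∈ Finset.univ.erase i, g j ^ k j := by
    rw [(hp i).dvd_finsetProd_iff]
    rintro ⟨j, hj, hdvd⟩
    exact hassoc (Finset.ne_of_mem_erase hj).symm
      ((hp i).irreducible.associated_of_dvd (hp j).irreducible ((hp i).dvd_of_dvd_pow hdvd))
  rw [← Finset.mul_prod_erase _ _ (Finset.mem_univ i)] at h
  exact D.dvd_apply_of_pow_mul_dvd_apply (hp i) (hk i) hcoprime (dvd_trans (dvd_mul_right _ _) h)

end Derivation

/-- For a UFD `R` that is a `ℂ`-algebra and `g = u * ∏ i, g i ^ k i` with `u` a unit and the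
`g i` pairwise non-associated irreducible elements, a derivation `D` is logarithmic along `g`
if and only if it is logarithmic along the reduction `∏ i, g i`. -/
theorem derivation_log_eq_log_reduction
    {R : Type*} [CommRing R] [IsDomain R] [UniqueFactorizationMonoid R] [Algebra ℂ R]
    {ℓ : ℕ} (g : Fin ℓ → R) (k : Fin ℓ → ℕ)
    (hirr : ∀ i, Irreducible (g i))
    (hassoc : ∀ i j, i ≠ j → ¬ Associated (g i) (g j))
    (hk : ∀ i, 1 ≤ k i)
    (u : Rˣ) (G : R) (hG : G = (u : R) * ∏ i, g i ^ k i)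
    (D : Derivation ℂ R R) :
    D G ∈ Ideal.span {G} ↔ D (∏ i, g i) ∈ Ideal.span {∏ i, g i} := by
  have hp i : Prime (g i) := UniqueFactorizationMonoid.irreducible_iff_prime.mp (hirr i)
  have hunit (n : ℕ) (hn : n ≠ 0) : IsUnit (n : R) := by
    simpa using (Ne.isUnit (Nat.cast_ne_zero.mpr hn : (n : ℂ) ≠ 0)).map (algebraMap ℂ R)
  have hreduced := D.prod_pow_dvd_apply_prod_pow_iff g 1 hp hassoc fun _ => hunit 1 one_ne_zero
  simp only [Pi.one_apply, pow_one] at hreduced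
  subst hG
  rw [Ideal.mem_span_singleton, Ideal.mem_span_singleton, D.units_mul_dvd_apply_units_mul_iff,
    hreduced, D.prod_pow_dvd_apply_prod_pow_iff g k hp hassoc
      fun i => hunit _ (Nat.one_le_iff_ne_zero.mp (hk i))]
end

section
/- Let R = MvPolynomial (Fin n) ℂ be the polynomial ring in n variables over ℂ, and let h₁, h₂ ∈ R be nonzero polynomials whose zero loci in ℂⁿ coincide as sets, i.e., for every point x ∈ ℂⁿ one has h₁(x) = 0 if and only if h₂(x) = 0. Then Der(−log h₁) = Der(−log h₂): for every derivation D ∈ Derivation ℂ R R, D h₁ ∈ Ideal.span {h₁} if and only if D h₂ ∈ Ideal.span {h₂}. -/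
/-!
In a unique factorization domain containing `ℚ`, `f ∣ D f` holds iff `p ∣ D p` for every prime
factor `p` of `f` (Saito): the Leibniz rule gives one direction, and for `f = p^m g` with `p ∤ g`
the term `m p^(m-1) g D p` of `D f` must be divisible by `p^m`, with `m` invertible. By the
Nullstellensatz, polynomials with the same zero locus generate principal ideals with the same
radical, hence have the same prime factors.
-/

section Logarithmic

variable {k A : Type*} [CommRing k] [CommRing A] [Algebra k A]

theorem Prime.dvd_of_dvd_of_mem_radical_span {p f g : A} (hp : Prime p) (hpf : p ∣ f)
    (hg : g ∈ (Ideal.span {f}).radical) : p ∣ g := by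
  obtain ⟨m, hm⟩ := hg
  exact hp.dvd_of_dvd_pow (hpf.trans (Ideal.mem_span_singleton.mp hm))

theorem Prime.dvd_iff_of_radical_span_eq {p f g : A} (hp : Prime p)
    (h : (Ideal.span {f}).radical = (Ideal.span {g}).radical) : p ∣ f ↔ p ∣ g :=
  ⟨fun hpf => hp.dvd_of_dvd_of_mem_radical_span hpf
      (h ▸ Ideal.le_radical (Ideal.mem_span_singleton_self g)),
    fun hpg => hp.dvd_of_dvd_of_mem_radical_span hpg
      (h.symm ▸ Ideal.le_radical (Ideal.mem_span_singleton_self f))⟩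

theorem dvd_derivation_self_of_prime_dvd [IsDomain A] [UniqueFactorizationMonoid A]
    (D : Derivation k A A) {f : A}
    (hD : ∀ p : A, Prime p → p ∣ f → p ∣ D p) : f ∣ D f := by
  induction f using UniqueFactorizationMonoid.induction_on_prime with
  | h₁ => simp
  | h₂ u hu => exact hu.dvd
  | h₃ a p _ hp ih =>
    have hDa : a ∣ D a := ih fun q hq hqa => hD q hq (hqa.mul_left p)
    have hDp : p ∣ D p := hD p hp (dvd_mul_right p a)
    rw [Derivation.leibniz, smul_eq_mul, smul_eq_mul]
    exact dvd_add (mul_dvd_mul_left p hDa) (mul_comm a p ▸ mul_dvd_mul_left a hDp)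

theorem Prime.dvd_derivation_self_of_dvd [IsDomain A] [UniqueFactorizationMonoid A] [Algebra ℚ A]
    (D : Derivation k A A) {f p : A} (hf : f ≠ 0) (hp : Prime p) (hpf : p ∣ f)
    (hD : f ∣ D f) : p ∣ D p := by
  obtain ⟨m, g, hpg, rfl⟩ := WfDvdMonoid.max_power_factor hf hp.irreducible
  obtain ⟨m, rfl⟩ : ∃ m', m = m' + 1 := Nat.exists_eq_succ_of_ne_zero <| by
    rintro rfl
    exact hpg (by simpa using hpf)
  have hunit : IsUnit ((m + 1 : ℕ) : A) := by
    simpa using (Nat.cast_ne_zero.mpr m.succ_ne_zero : ((m + 1 : ℕ) : ℚ) ≠ 0).isUnit.map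
      (algebraMap ℚ A)
  -- `D (p^(m+1) g) = p^(m+1) D g + (m+1) p^m g D p`, and `p^(m+1)` divides the left side
  have hdvd : p ^ m * p ∣ p ^ m * (((m + 1 : ℕ) : A) * (g * D p)) := by
    have hDf : p ^ (m + 1) * g ∣ D (p ^ (m + 1) * g) := hD
    rw [Derivation.leibniz, Derivation.leibniz_pow, smul_eq_mul, smul_eq_mul, nsmul_eq_mul,
      smul_eq_mul, Nat.add_sub_cancel] at hDf
    rw [← pow_succ]
    convert (dvd_add_right (dvd_mul_right _ _)).mp ((dvd_mul_right _ g).trans hDf) using 1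
    ring
  exact (hp.dvd_or_dvd (hunit.dvd_mul_left.mp
    ((mul_dvd_mul_iff_left (pow_ne_zero m hp.ne_zero)).mp hdvd))).resolve_left hpg

theorem dvd_derivation_self_iff [IsDomain A] [UniqueFactorizationMonoid A] [Algebra ℚ A]
    (D : Derivation k A A) {f : A} (hf : f ≠ 0) :
    f ∣ D f ↔ ∀ p : A, Prime p → p ∣ f → p ∣ D p :=
  ⟨fun hD _ hp hpf => hp.dvd_derivation_self_of_dvd D hf hpf hD,
    dvd_derivation_self_of_prime_dvd D⟩

end Logarithmic

namespace MvPolynomial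

variable {σ K : Type*} [Field K]

theorem zeroLocus_span_singleton (f : MvPolynomial σ K) :
    zeroLocus K (Ideal.span {f}) = {x | eval x f = 0} := by
  ext x
  simp only [mem_zeroLocus_iff, Ideal.mem_span_singleton', Set.mem_ofPred_eq]
  refine ⟨fun h => by simpa using h f ⟨1, one_mul f⟩, ?_⟩
  rintro hf _ ⟨c, rfl⟩
  simp [hf]

theorem radical_span_singleton_eq_of_eval_eq_zero_iff [IsAlgClosed K] [Finite σ]
    {f g : MvPolynomial σ K} (h : ∀ x, eval x f = 0 ↔ eval x g = 0) :
    (Ideal.span {f}).radical = (Ideal.span {g}).radical := by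
  rw [← vanishingIdeal_zeroLocus_eq_radical (K := K),
    ← vanishingIdeal_zeroLocus_eq_radical (K := K), zeroLocus_span_singleton,
    zeroLocus_span_singleton]
  simp only [h]

end MvPolynomial

/-- If two nonzero polynomials `h₁, h₂ ∈ ℂ[x₁,…,xₙ]` have the same zero locus in `ℂⁿ`, then
they have the same module of logarithmic derivations: `Der(-log h₁) = Der(-log h₂)`. -/
theorem derivation_log_eq_of_eq_zeroLocus
    {n : ℕ} (h₁ h₂ : MvPolynomial (Fin n) ℂ)
    (h₁0 : h₁ ≠ 0) (h₂0 : h₂ ≠ 0)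
    (hloc : ∀ x : Fin n → ℂ, MvPolynomial.eval x h₁ = 0 ↔ MvPolynomial.eval x h₂ = 0)
    (D : Derivation ℂ (MvPolynomial (Fin n) ℂ) (MvPolynomial (Fin n) ℂ)) :
    D h₁ ∈ Ideal.span {h₁} ↔ D h₂ ∈ Ideal.span {h₂} := by
  have hrad := MvPolynomial.radical_span_singleton_eq_of_eval_eq_zero_iff hloc
  rw [Ideal.mem_span_singleton, Ideal.mem_span_singleton, dvd_derivation_self_iff D h₁0,
    dvd_derivation_self_iff D h₂0]
  exact forall_congr' fun p => forall_congr' fun hp => by rw [hp.dvd_iff_of_radical_span_eq hrad]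
end

section
/- Let R be the multivariable polynomial ring over ℂ in the variables x_{ij}, 1 ≤ i ≤ n, 1 ≤ j ≤ n+1, let X be the generic n×(n+1) matrix with (i,j) entry x_{ij}, and for 1 ≤ k ≤ n+1 let Δ_k = (−1)^k times the determinant of the n×n matrix obtained from X by deleting column k. Then for all indices p ≠ q in {1, …, n+1} and every k ∈ {1, …, n+1}, the polynomial identity ∑_{i=1}^{n} x_{iq} · ∂Δ_k/∂x_{ip} = −δ_{kq} Δ_p holds in R, where δ_{kq} is 1 if k = q and 0 otherwise. -/
/-!
The operator `f ↦ ∑ i, x_{iq} ∂f/∂x_{ip}` is a derivation `D` (polarization) that sends column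
`p` of `X` to column `q` and kills all other columns. Bordering `X` by the unit row `e_k` on top
gives a square matrix `B_k` with `det B_k = -Δ_k`, which absorbs all sign bookkeeping. By the
Leibniz rule for determinants, `D (det B_k)` is the determinant of `B_k` with column `p` replaced
by `(column q) - δ_{kq} e_0`. Since `p ≠ q`, the first part has a repeated column, and expanding
the second along column `p` gives `-Δ_p`.
-/

open MvPolynomial

/-- The generic `n × (n+1)` matrix over `ℂ`, whose `(i,j)` entry is the variable `x_{ij}`. -/
noncomputable def genericMatrix (n : ℕ) :
    Matrix (Fin n) (Fin (n + 1)) (MvPolynomial (Fin n × Fin (n + 1)) ℂ) :=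
  fun i j => MvPolynomial.X (i, j)

/-- `Δ_k = (-1)^k` times the determinant of the generic `n × (n+1)` matrix with column `k`
deleted (with `k` counted starting from `1`, i.e. the sign is `(-1)^(k+1)` for `k : Fin (n+1)`). -/
noncomputable def genericSignedMinor (n : ℕ) (k : Fin (n + 1)) :
    MvPolynomial (Fin n × Fin (n + 1)) ℂ :=
  (-1) ^ ((k : ℕ) + 1) * ((genericMatrix n).submatrix id k.succAbove).det

namespace Matrix

variable {A : Type*} {n : ℕ}

def consRow (v : Fin (n + 1) → A) (X : Matrix (Fin n) (Fin (n + 1)) A) :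
    Matrix (Fin (n + 1)) (Fin (n + 1)) A :=
  of (Fin.cons v fun i => X i)

@[simp] theorem consRow_zero (v : Fin (n + 1) → A) (X : Matrix (Fin n) (Fin (n + 1)) A)
    (j : Fin (n + 1)) : consRow v X 0 j = v j := rfl

@[simp] theorem consRow_succ (v : Fin (n + 1) → A) (X : Matrix (Fin n) (Fin (n + 1)) A)
    (i : Fin n) (j : Fin (n + 1)) : consRow v X i.succ j = X i j := rfl

variable [CommRing A]

def signedMinor (X : Matrix (Fin n) (Fin (n + 1)) A) (k : Fin (n + 1)) : A :=
  (-1) ^ ((k : ℕ) + 1) * (X.submatrix id k.succAbove).det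

theorem det_consRow (v : Fin (n + 1) → A) (X : Matrix (Fin n) (Fin (n + 1)) A) :
    (consRow v X).det = -∑ j, v j * X.signedMinor j := by
  rw [det_succ_row_zero, ← Finset.sum_neg_distrib]
  refine Finset.sum_congr rfl fun j _ => ?_
  have : (consRow v X).submatrix Fin.succ j.succAbove = X.submatrix id j.succAbove := rfl
  rw [this, signedMinor, consRow_zero]
  ring

theorem det_consRow_single (k : Fin (n + 1)) (X : Matrix (Fin n) (Fin (n + 1)) A) :
    (consRow (Pi.single k 1) X).det = -X.signedMinor k := by
  simp [det_consRow, Pi.single_apply]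

theorem det_updateCol_consRow_single_zero (v : Fin (n + 1) → A)
    (X : Matrix (Fin n) (Fin (n + 1)) A) (p : Fin (n + 1)) :
    ((consRow v X).updateCol p (Pi.single 0 1)).det = -X.signedMinor p := by
  rw [det_succ_column _ p, Finset.sum_eq_single 0]
  · have : ((consRow v X).updateCol p (Pi.single 0 1)).submatrix (Fin.succAbove 0)
        p.succAbove = X.submatrix id p.succAbove := by
      ext a b
      rw [submatrix_apply, updateCol_ne (Fin.succAbove_ne p b)]
      rfl
    rw [this, signedMinor, updateCol_self, Pi.single_eq_same, Fin.val_zero, zero_add]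
    ring
  · intro r _ hr
    rw [updateCol_self, Pi.single_eq_of_ne hr, mul_zero, zero_mul]
  · simp

end Matrix

namespace Derivation

open Matrix

variable {R A M : Type*} [CommSemiring R] [CommRing A] [Algebra R A]

theorem leibniz_prod [AddCommMonoid M] [Module A M] [Module R M] [IsScalarTower R A M]
    (D : Derivation R A M) {ι : Type*} [DecidableEq ι] (s : Finset ι) (f : ι → A) :
    D (∏ i ∈ s, f i) = ∑ j ∈ s, (∏ i ∈ s.erase j, f i) • D (f j) := by
  induction s using Finset.induction_on with
  | empty => simp
  | @insert a s ha ih =>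
    rw [Finset.prod_insert ha, leibniz, ih, Finset.sum_insert ha, Finset.erase_insert ha,
      Finset.smul_sum, add_comm]
    congr 1
    refine Finset.sum_congr rfl fun j hj => ?_
    rw [Finset.erase_insert_of_ne (ne_of_mem_of_not_mem hj ha).symm,
      Finset.prod_insert (fun h => ha (Finset.mem_of_mem_erase h)), smul_smul]

theorem leibniz_det {m : Type*} [Fintype m] [DecidableEq m] (D : Derivation R A A)
    (N : Matrix m m A) :
    D N.det = ∑ j, (N.updateCol j fun i => D (N i j)).det := by
  simp only [det_apply, map_sum, Units.smul_def, map_zsmul, leibniz_prod]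
  rw [Finset.sum_comm]
  refine Finset.sum_congr rfl fun σ _ => ?_
  rw [Finset.smul_sum]
  refine Finset.sum_congr rfl fun j _ => ?_
  rw [← Finset.mul_prod_erase _ _ (Finset.mem_univ j), updateCol_self,
    Finset.prod_congr rfl fun i hi => updateCol_ne (Finset.ne_of_mem_erase hi),
    smul_eq_mul, mul_comm]

theorem apply_signedMinor_of_apply_entry {n : ℕ} (D : Derivation R A A)
    (X : Matrix (Fin n) (Fin (n + 1)) A) {p q : Fin (n + 1)} (hpq : p ≠ q)
    (hD : ∀ i j, D (X i j) = if j = p then X i q else 0) (k : Fin (n + 1)) :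
    D (X.signedMinor k) = if k = q then -X.signedMinor p else 0 := by
  set v : Fin (n + 1) → A := Pi.single k 1
  set B := consRow v X
  have hv : ∀ j, D (v j) = 0 := fun j => by
    by_cases hjk : j = k <;> simp [v, hjk]
  have hcol : ∀ j, (fun r => D (B r j)) =
      if j = p then (fun r => B r q) - v q • (Pi.single 0 1 : Fin (n + 1) → A) else 0 := by
    intro j
    funext r
    refine Fin.cases ?_ (fun i => ?_) r
    · by_cases hj : j = p <;> simp [B, hv, hj]
    · by_cases hj : j = p <;> simp [B, hD, hj]
  have hDB : D B.det = v q * X.signedMinor p := by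
    rw [leibniz_det, Finset.sum_eq_single p, hcol, if_pos rfl, sub_eq_add_neg, det_updateCol_add,
      ← neg_smul, det_updateCol_smul, det_updateCol_eq_zero hpq.symm,
      det_updateCol_consRow_single_zero]
    · ring
    · intro j _ hj
      rw [hcol, if_neg hj]
      exact det_eq_zero_of_column_eq_zero j fun r => by simp
    · simp
  rw [← neg_neg (X.signedMinor k), ← det_consRow_single, map_neg, hDB]
  split_ifs with hkq
  · simp [v, hkq]
  · simp [v, Ne.symm hkq]

end Derivation

namespace MvPolynomial

variable {R m ι : Type*} [CommSemiring R] [Fintype m]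

noncomputable def polarization (p q : ι) :
    Derivation R (MvPolynomial (m × ι) R) (MvPolynomial (m × ι) R) :=
  ∑ i : m, (X (i, q) : MvPolynomial (m × ι) R) • pderiv (i, p)

theorem polarization_apply (p q : ι) (f : MvPolynomial (m × ι) R) :
    polarization p q f = ∑ i, X (i, q) * pderiv (i, p) f := by
  rw [polarization, ← Derivation.coeFnAddMonoidHom_apply, map_sum, Finset.sum_apply]
  simp only [Derivation.coeFnAddMonoidHom_apply, Derivation.smul_apply, smul_eq_mul]

theorem polarization_X [DecidableEq ι] (p q : ι) (i : m) (j : ι) :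
    polarization p q (X (i, j) : MvPolynomial (m × ι) R) = if j = p then X (i, q) else 0 := by
  classical
  by_cases hj : j = p <;> simp [polarization_apply, pderiv_X, Pi.single_apply, hj]

end MvPolynomial

/-- For `p ≠ q` and any `k`, the identity
`∑ i, x_{iq} ∂Δ_k/∂x_{ip} = -δ_{kq} Δ_p` holds among the signed maximal minors of the
generic `n × (n+1)` matrix. -/
theorem sum_X_mul_pderiv_genericSignedMinor (n : ℕ) (p q : Fin (n + 1)) (hpq : p ≠ q)
    (k : Fin (n + 1)) :
    ∑ i : Fin n, (genericMatrix n) i q * MvPolynomial.pderiv (i, p) (genericSignedMinor n k) =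
      if k = q then -genericSignedMinor n p else 0 :=
  (polarization_apply p q _).symm.trans <|
    (polarization p q).apply_signedMinor_of_apply_entry (genericMatrix n) hpq
      (polarization_X p q) k
end

section
/- Let R be the multivariable polynomial ring over ℂ in the variables x_{ij}, 1 ≤ i ≤ n, 1 ≤ j ≤ n+1, let X be the generic n×(n+1) matrix with (i,j) entry x_{ij}, and for 1 ≤ k ≤ n+1 let Δ_k = (−1)^k times the determinant of the n×n matrix obtained from X by deleting column k. Then for every r ∈ {1, …, n} and all q, k ∈ {1, …, n+1}, the polynomial identity ∑_{j=1}^{n+1} x_{rj} · ∂Δ_k/∂x_{rj} − ∑_{i=1}^{n} x_{iq} · ∂Δ_k/∂x_{iq} = δ_{kq} Δ_q holds in R, where δ_{kq} is 1 if k = q and 0 otherwise. -/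
/-!
Give the variable `x_{ij}` weight `1` if it lies in row `r` (resp. column `q`) and `0` otherwise.
Each term of the Leibniz expansion of `Δ_k` contains exactly one variable from row `r`, and
exactly one from column `q` unless `q = k`, when it contains none. So `Δ_k` is weighted
homogeneous of degree `1` for the row weight and `1 - δ_{kq}` for the column weight, and the two
sums in the identity are these degrees times `Δ_k` by the weighted Euler identity.
-/

open MvPolynomial

open Finset

theorem MvPolynomial.IsWeightedHomogeneous.sum_X_mul_pderiv_of_indicator {R σ : Type*}
    [CommSemiring R] [Fintype σ] {φ : MvPolynomial σ R} {S : Finset σ} {d : ℕ}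
    (h : φ.IsWeightedHomogeneous (Set.indicator (S : Set σ) 1) d) :
    ∑ v ∈ S, X v * pderiv v φ = d • φ := by
  classical
  rw [← h.sum_weight_X_mul_pderiv]
  simp [Set.indicator_apply, ite_smul, sum_ite_mem]

theorem Matrix.isWeightedHomogeneous_det {R σ m M : Type*} [CommRing R] [Fintype m]
    [DecidableEq m] [AddCommMonoid M] {w : σ → M} (A : Matrix m m (MvPolynomial σ R))
    (a b : m → M) (h : ∀ i j, (A i j).IsWeightedHomogeneous w (a i + b j)) :
    A.det.IsWeightedHomogeneous w (∑ i, a i + ∑ j, b j) := by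
  rw [Matrix.det_apply]
  refine IsWeightedHomogeneous.sum _ _ _ fun τ _ => ?_
  have hprod : _ ∈ weightedHomogeneousSubmodule R w _ :=
    IsWeightedHomogeneous.prod univ (fun i => A (τ i) i) _ fun i _ => h (τ i) i
  rw [sum_add_distrib, Equiv.sum_comp τ a] at hprod
  exact zsmul_mem hprod _

theorem Fin.card_filter_succAbove_eq {n : ℕ} (k q : Fin (n + 1)) :
    #{j : Fin n | k.succAbove j = q} = if k = q then 0 else 1 := by
  split_ifs with hkq
  · subst hkq
    simp [Fin.succAbove_ne]
  · obtain ⟨j₀, rfl⟩ := Fin.exists_succAbove_eq (Ne.symm hkq)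
    simp [filter_eq']

theorem isWeightedHomogeneous_genericSignedMinor {n : ℕ} (k : Fin (n + 1))
    (w : Fin n × Fin (n + 1) → ℕ) (a b : Fin n → ℕ)
    (h : ∀ i j, w (i, k.succAbove j) = a i + b j) :
    (genericSignedMinor n k).IsWeightedHomogeneous w (∑ i, a i + ∑ j, b j) := by
  have hsign : ((-1) ^ ((k : ℕ) + 1) : MvPolynomial (Fin n × Fin (n + 1)) ℂ) =
      C ((-1) ^ ((k : ℕ) + 1)) := by simp
  rw [genericSignedMinor, hsign]
  refine IsWeightedHomogeneous.C_mul (Matrix.isWeightedHomogeneous_det _ a b fun i j => ?_) _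
  rw [← h]
  exact isWeightedHomogeneous_X ℂ w _

/-- For any row `r` and any columns `q, k`, the identity
`∑ j, x_{rj} ∂Δ_k/∂x_{rj} - ∑ i, x_{iq} ∂Δ_k/∂x_{iq} = δ_{kq} Δ_q` holds among the signed
maximal minors of the generic `n × (n+1)` matrix. -/
theorem sum_X_mul_pderiv_genericSignedMinor_diag (n : ℕ) (r : Fin n) (q k : Fin (n + 1)) :
    (∑ j : Fin (n + 1),
        (genericMatrix n) r j * MvPolynomial.pderiv (r, j) (genericSignedMinor n k)) -
      ∑ i : Fin n, (genericMatrix n) i q * MvPolynomial.pderiv (i, q) (genericSignedMinor n k) =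
      if k = q then genericSignedMinor n q else 0 := by
  have hrow :
      ∑ j, X (r, j) * pderiv (r, j) (genericSignedMinor n k) = genericSignedMinor n k := by
    have hhom := isWeightedHomogeneous_genericSignedMinor k
      (Set.indicator ↑({r} ×ˢ univ : Finset (Fin n × Fin (n + 1))) 1)
      (fun i => if i = r then 1 else 0) 0 (by simp [Set.indicator_apply, eq_comm])
    simpa [sum_product] using hhom.sum_X_mul_pderiv_of_indicator
  have hcol : ∑ i, X (i, q) * pderiv (i, q) (genericSignedMinor n k) =
      (if k = q then 0 else 1) • genericSignedMinor n k := by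
    have hhom := isWeightedHomogeneous_genericSignedMinor k
      (Set.indicator ↑(univ ×ˢ {q} : Finset (Fin n × Fin (n + 1))) 1)
      0 (fun j => if k.succAbove j = q then 1 else 0) (by simp [Set.indicator_apply, eq_comm])
    simpa [sum_product_right, sum_boole, Fin.card_filter_succAbove_eq] using
      hhom.sum_X_mul_pderiv_of_indicator
  simp only [genericMatrix, hrow, hcol]
  split_ifs with hkq
  · subst hkq
    simp
  · simp
end

section
/- Let m, n ≥ 1 and let B be an m×n complex matrix with rank B ≥ m−1. Then for every skew-symmetric m×m complex matrix C (Cᵀ = −C) there exist an n×m complex matrix D and a symmetric m×m complex matrix E (Eᵀ = E) such that C = B·D + E. -/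
open Matrix

/-!
The columns of `B * D` range over `range B`, which is either everything or, when `rank B = m - 1`,
the hyperplane `{x | v ⬝ᵥ x = 0}` for some `v ≠ 0`. In the second case it suffices to find a
symmetric `E` with `vᵀ E = vᵀ C`, and such an `E` exists for every prescribed row `vᵀ E`: with
`v ⬝ᵥ u = 1` and `w` the target row, take `E = u wᵀ + w uᵀ - (v ⬝ᵥ w) u uᵀ`.
-/

namespace Matrix

variable {K : Type*} [Field K] {l m n : Type*} [Fintype n]

theorem exists_mul_eq_of_col_mem_range {R : Type*} [CommSemiring R] (B : Matrix m n R)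
    (X : Matrix m l R) (hX : ∀ j, X.col j ∈ LinearMap.range B.mulVecLin) :
    ∃ D : Matrix n l R, B * D = X := by
  choose d hd using hX
  exact ⟨(of d)ᵀ, ext fun i j => congrFun (hd j) i⟩

theorem exists_ne_zero_mem_range_of_dotProduct_eq_zero [Fintype m] [DecidableEq m]
    (B : Matrix m n K) (hB : Fintype.card m - 1 ≤ B.rank)
    (htop : LinearMap.range B.mulVecLin ≠ ⊤) :
    ∃ v ≠ 0, ∀ x, v ⬝ᵥ x = 0 → x ∈ LinearMap.range B.mulVecLin := by
  obtain ⟨f, hf, hle⟩ := Submodule.exists_le_ker_of_lt_top _ (lt_top_iff_ne_top.2 htop)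
  have hrange : LinearMap.range B.mulVecLin = LinearMap.ker f := by
    refine Submodule.eq_of_le_of_finrank_le hle ?_
    have hker := Module.Dual.finrank_ker_add_one_of_ne_zero hf
    rw [Module.finrank_fintype_fun_eq_card] at hker
    rw [← Matrix.rank]
    omega
  refine ⟨(dotProductEquiv K m).symm f, by simpa using hf, fun x hx => ?_⟩
  rw [hrange, LinearMap.mem_ker, ← (dotProductEquiv K m).apply_symm_apply f]
  exact hx

theorem exists_transpose_eq_self_vecMul_eq [Fintype m] [DecidableEq m] {v : m → K} (hv : v ≠ 0)
    (w : m → K) : ∃ E : Matrix m m K, Eᵀ = E ∧ v ᵥ* E = w := by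
  obtain ⟨i, hi⟩ := Function.ne_iff.mp hv
  set u : m → K := Pi.single i (v i)⁻¹
  have hvu : v ⬝ᵥ u = 1 := by simp [u, dotProduct_single, mul_inv_cancel₀ hi]
  refine ⟨vecMulVec u w + vecMulVec w u - (v ⬝ᵥ w) • vecMulVec u u, ?_, ?_⟩
  · simp only [transpose_sub, transpose_add, transpose_smul, transpose_vecMulVec]
    abel
  · simp only [vecMul_sub, vecMul_add, vecMul_smul, vecMul_vecMulVec, hvu, one_smul]
    abel

end Matrix

theorem skew_eq_mul_add_symm_of_rank_ge_general {m n : ℕ}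
    (B : Matrix (Fin m) (Fin n) ℂ) (hB : m - 1 ≤ B.rank)
    (C : Matrix (Fin m) (Fin m) ℂ) :
    ∃ (D : Matrix (Fin n) (Fin m) ℂ) (E : Matrix (Fin m) (Fin m) ℂ),
      Eᵀ = E ∧ C = B * D + E := by
  by_cases htop : LinearMap.range B.mulVecLin = ⊤
  · obtain ⟨D, hD⟩ := B.exists_mul_eq_of_col_mem_range C fun j => htop ▸ Submodule.mem_top
    exact ⟨D, 0, transpose_zero, by rw [hD, add_zero]⟩
  obtain ⟨v, hv, hrange⟩ :=
    B.exists_ne_zero_mem_range_of_dotProduct_eq_zero (by simpa using hB) htop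
  obtain ⟨E, hE, hvE⟩ := exists_transpose_eq_self_vecMul_eq hv (v ᵥ* C)
  have hcol (j : Fin m) : v ⬝ᵥ (C - E).col j = 0 := by
    change (v ᵥ* (C - E)) j = 0
    rw [vecMul_sub, hvE, sub_self, Pi.zero_apply]
  obtain ⟨D, hD⟩ := B.exists_mul_eq_of_col_mem_range (C - E) fun j => hrange _ (hcol j)
  exact ⟨D, E, hE, by rw [hD, sub_add_cancel]⟩

/-- If `B` is an `m × n` complex matrix of rank at least `m - 1`, then every skew-symmetric
`m × m` matrix `C` can be written as `C = B·D + E` with `E` symmetric. -/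
theorem skew_eq_mul_add_symm_of_rank_ge {m n : ℕ} (hm : 1 ≤ m) (hn : 1 ≤ n)
    (B : Matrix (Fin m) (Fin n) ℂ) (hB : m - 1 ≤ B.rank)
    (C : Matrix (Fin m) (Fin m) ℂ) (hC : Cᵀ = -C) :
    ∃ (D : Matrix (Fin n) (Fin m) ℂ) (E : Matrix (Fin m) (Fin m) ℂ),
      Eᵀ = E ∧ C = B * D + E :=
  skew_eq_mul_add_symm_of_rank_ge_general B hB C
end

section
/- Let n be even, let Ω be the standard symplectic n×n matrix with block form [[0, I],[−I, 0]] (I the identity of size n/2), and let 1 ≤ m ≤ n+1. For an n×m complex matrix A, the ℂ-linear map from n×m complex matrices to skew-symmetric m×m complex matrices given by B ↦ AᵀΩB + BᵀΩA is surjective onto the space {C ∈ M_m(ℂ) : Cᵀ = −C} of skew-symmetric matrices if and only if rank A ≥ m−1. -/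
/-!
Since `Ωᵀ = -Ω` and `Ω` is invertible, the substitution `X = ΩB` turns the map into
`X ↦ AᵀX - XᵀA`, and `rank A ≥ m - 1` says that `ker A` has dimension at most one.

If `x, y ∈ ker A` are linearly independent, then `xᵀ(AᵀX - XᵀA)y = 0` for every `X`, whereas
`xᵀCy ≠ 0` for a suitable skew `C = Eᵢⱼ - Eⱼᵢ`.

Conversely, if the row space `V` of `A` has codimension at most one, write `1 = P + Q` with `P`
mapping into `V` and `Q = u fᵀ` of rank at most one. For skew `C` we have `QCQᵀ = (fᵀCf) uuᵀ = 0`,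
hence `C = (P + Q) C (P + Q)ᵀ = M - Mᵀ` with `M = P C (½P + Q)ᵀ`, and `M = AᵀX` for some `X`
because the columns of `M` lie in `V`.
-/

open Matrix

/-- The standard symplectic matrix `Ω = [[0, I], [-I, 0]]` of (even) size `2h`. -/
def stdSymplectic (h : ℕ) : Matrix (Fin h ⊕ Fin h) (Fin h ⊕ Fin h) ℂ :=
  Matrix.fromBlocks 0 1 (-1) 0

open Module LinearMap

lemma stdSymplectic_transpose (h : ℕ) : (stdSymplectic h)ᵀ = -stdSymplectic h := by
  simp [stdSymplectic, fromBlocks_transpose, fromBlocks_neg]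

lemma stdSymplectic_mul_self (h : ℕ) : stdSymplectic h * stdSymplectic h = -1 := by
  simp [stdSymplectic, fromBlocks_multiply, ← fromBlocks_one, fromBlocks_neg]

lemma isUnit_stdSymplectic (h : ℕ) : IsUnit (stdSymplectic h) :=
  IsUnit.of_mul_eq_one (-stdSymplectic h) (by rw [Matrix.mul_neg, stdSymplectic_mul_self, neg_neg])

lemma Submodule.exists_sub_smul_mem_of_finrank_le {K V : Type*} [Field K] [AddCommGroup V]
    [Module K V] [FiniteDimensional K V] (p : Submodule K V) (hp : finrank K V ≤ finrank K p + 1) :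
    ∃ (u : V) (φ : Dual K V), ∀ v, v - φ v • u ∈ p := by
  rcases eq_or_lt_of_le (le_top : p ≤ ⊤) with rfl | hlt
  · exact ⟨0, 0, fun _ => Submodule.mem_top⟩
  obtain ⟨φ, hφ, hpφ⟩ := p.exists_le_ker_of_lt_top hlt
  have hp_eq : p = ker φ := Submodule.eq_of_le_of_finrank_le hpφ <| by
    have := Dual.finrank_ker_add_one_of_ne_zero hφ
    omega
  obtain ⟨u, hu⟩ := LinearMap.surjective hφ 1
  exact ⟨u, φ, fun v => by simp [hp_eq, hu]⟩

namespace Matrix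

variable {K ι n : Type*}

lemma exists_transpose_mul_mul_add_eq_iff [CommRing K] [Fintype ι] [DecidableEq ι]
    {Ω : Matrix ι ι K} (hΩ : Ωᵀ = -Ω) (hΩ_unit : IsUnit Ω) (A : Matrix ι n K)
    (C : Matrix n n K) :
    (∃ B : Matrix ι n K, Aᵀ * Ω * B + Bᵀ * Ω * A = C) ↔
      ∃ X : Matrix ι n K, Aᵀ * X - Xᵀ * A = C := by
  have hB (B : Matrix ι n K) : Aᵀ * Ω * B + Bᵀ * Ω * A = Aᵀ * (Ω * B) - (Ω * B)ᵀ * A := by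
    rw [transpose_mul, hΩ, Matrix.mul_neg, Matrix.neg_mul, sub_neg_eq_add, Matrix.mul_assoc]
  obtain ⟨Ω', hΩ'⟩ := hΩ_unit.exists_right_inv
  constructor
  · rintro ⟨B, rfl⟩
    exact ⟨Ω * B, (hB B).symm⟩
  · rintro ⟨X, rfl⟩
    refine ⟨Ω' * X, ?_⟩
    rw [hB, ← Matrix.mul_assoc Ω, hΩ', Matrix.one_mul]

lemma dotProduct_transpose_mul_sub_mulVec_eq_zero [CommRing K] [Fintype ι] [Fintype n]
    {A : Matrix ι n K} {x y : n → K} (hx : A *ᵥ x = 0) (hy : A *ᵥ y = 0) (X : Matrix ι n K) :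
    x ⬝ᵥ (Aᵀ * X - Xᵀ * A) *ᵥ y = 0 := by
  rw [sub_mulVec, ← mulVec_mulVec, ← mulVec_mulVec, hy, mulVec_zero, sub_zero,
    dotProduct_mulVec, vecMul_transpose, hx, zero_dotProduct]

lemma exists_skew_dotProduct_mulVec_ne_zero [CommRing K] [Nontrivial K] [Fintype n]
    [DecidableEq n] {x y : n → K} (hxy : LinearIndependent K ![x, y]) :
    ∃ C : Matrix n n K, Cᵀ = -C ∧ x ⬝ᵥ C *ᵥ y ≠ 0 := by
  obtain ⟨j, hj⟩ := Function.ne_iff.mp (hxy.ne_zero 1)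
  by_contra! h
  refine hj (LinearIndependent.pair_iff.mp hxy (y j) (-x j) (funext fun i => ?_)).1
  have hij := h (single i j 1 - single j i 1) (by simp [transpose_sub])
  simp only [sub_mulVec, single_mulVec_eq, one_mul, dotProduct_sub, dotProduct_smul,
    dotProduct_single, mul_one, smul_eq_mul] at hij
  simp only [neg_smul, Pi.add_apply, Pi.smul_apply, smul_eq_mul, Pi.neg_apply, Pi.zero_apply]
  linear_combination hij

lemma exists_linearIndependent_pair_mulVec_eq_zero [Field K] [Fintype n] (A : Matrix ι n K)
    (h : A.rank + 2 ≤ Fintype.card n) :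
    ∃ x y : n → K, A *ᵥ x = 0 ∧ A *ᵥ y = 0 ∧ LinearIndependent K ![x, y] := by
  have hker : 1 < finrank K (ker A.mulVecLin) := by
    have : A.rank + finrank K (ker A.mulVecLin) = Fintype.card n :=
      A.mulVecLin.finrank_range_add_finrank_ker.trans (finrank_fintype_fun_eq_card K)
    omega
  have : Nontrivial (ker A.mulVecLin) := Module.nontrivial_of_finrank_pos (R := K) (by omega)
  obtain ⟨x, hx⟩ := exists_ne (0 : ker A.mulVecLin)
  obtain ⟨y, hxy⟩ := exists_linearIndependent_pair_of_one_lt_finrank hker hx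
  refine ⟨x, y, x.2, y.2, LinearIndependent.pair_iff.mpr fun s t hst => ?_⟩
  exact LinearIndependent.pair_iff.mp hxy s t (Subtype.ext hst)

lemma card_le_rank_add_one_of_forall_skew [Field K] [Fintype ι] [Fintype n] [DecidableEq n]
    (A : Matrix ι n K)
    (h : ∀ C : Matrix n n K, Cᵀ = -C → ∃ X : Matrix ι n K, Aᵀ * X - Xᵀ * A = C) :
    Fintype.card n ≤ A.rank + 1 := by
  by_contra! hlt
  obtain ⟨x, y, hx, hy, hxy⟩ := A.exists_linearIndependent_pair_mulVec_eq_zero (by omega)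
  obtain ⟨C, hC, hxCy⟩ := exists_skew_dotProduct_mulVec_ne_zero hxy
  obtain ⟨X, rfl⟩ := h C hC
  exact hxCy (dotProduct_transpose_mul_sub_mulVec_eq_zero hx hy X)

lemma exists_mul_eq_of_range_mulVecLin_le {l : Type*} [CommSemiring K] [Fintype ι] [Fintype n]
    [DecidableEq n] {B : Matrix l ι K} {M : Matrix l n K}
    (h : range M.mulVecLin ≤ range B.mulVecLin) : ∃ X : Matrix ι n K, B * X = M := by
  choose x hx using fun j => h ⟨Pi.single j 1, rfl⟩
  refine ⟨(of x)ᵀ, ext_of_mulVec_single fun j => ?_⟩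
  rw [← mulVec_mulVec, mulVec_single_one, mulVec_single_one]
  simpa using hx j

lemma dotProduct_mulVec_self_eq_zero [CommRing K] [NoZeroDivisors K] [NeZero (2 : K)]
    [Fintype n] {C : Matrix n n K} (hC : Cᵀ = -C) (f : n → K) : f ⬝ᵥ C *ᵥ f = 0 := by
  have h : f ⬝ᵥ C *ᵥ f = -(f ⬝ᵥ C *ᵥ f) := by
    conv_lhs => rw [dotProduct_mulVec, ← transpose_transpose C, vecMul_transpose, hC,
      dotProduct_comm]
    rw [neg_mulVec, dotProduct_neg]
  have h2 : (2 : K) * (f ⬝ᵥ C *ᵥ f) = 0 := by linear_combination h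
  exact (mul_eq_zero.mp h2).resolve_left two_ne_zero

lemma sub_transpose_eq_of_add_eq_one [Field K] [NeZero (2 : K)] [Fintype n] [DecidableEq n]
    {C P Q : Matrix n n K} (hC : Cᵀ = -C) (hPQ : P + Q = 1) (hQ : Q * C * Qᵀ = 0) :
    P * C * ((2⁻¹ : K) • P + Q)ᵀ - (P * C * ((2⁻¹ : K) • P + Q)ᵀ)ᵀ = C := by
  calc _ = (P + Q) * C * (P + Q)ᵀ - Q * C * Qᵀ := by
        simp only [transpose_mul, transpose_add, transpose_smul, transpose_transpose, hC,
          Matrix.mul_add, Matrix.add_mul, Matrix.mul_smul, Matrix.mul_neg, Matrix.neg_mul,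
          Matrix.mul_assoc]
        linear_combination (norm := module)
          (inv_mul_cancel₀ (two_ne_zero' K)) • (P * (C * Pᵀ))
    _ = C := by rw [hPQ, hQ, transpose_one, Matrix.one_mul, Matrix.mul_one, sub_zero]

lemma exists_transpose_mul_sub_eq_of_card_le [Field K] [NeZero (2 : K)] [Fintype ι] [Fintype n]
    [DecidableEq n] (A : Matrix ι n K) (hA : Fintype.card n ≤ A.rank + 1) {C : Matrix n n K}
    (hC : Cᵀ = -C) : ∃ X : Matrix ι n K, Aᵀ * X - Xᵀ * A = C := by
  obtain ⟨u, φ, hφ⟩ := (range Aᵀ.mulVecLin).exists_sub_smul_mem_of_finrank_le <| by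
    rwa [finrank_fintype_fun_eq_card, ← rank, rank_transpose]
  set f := (dotProductEquiv K n).symm φ
  have hf (v : n → K) : f ⬝ᵥ v = φ v :=
    LinearMap.congr_fun ((dotProductEquiv K n).apply_symm_apply φ) v
  set Q := vecMulVec u f
  obtain ⟨Y, hY⟩ : ∃ Y : Matrix ι n K, Aᵀ * Y = 1 - Q := by
    refine exists_mul_eq_of_range_mulVecLin_le ?_
    rintro _ ⟨v, rfl⟩
    simpa [Q, hf, sub_mulVec, vecMulVec_mulVec] using hφ v
  have hQ : Q * C * Qᵀ = 0 := by
    rw [transpose_vecMulVec, vecMulVec_mul, vecMulVec_mul_vecMulVec, ← dotProduct_mulVec,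
      dotProduct_mulVec_self_eq_zero hC, zero_smul, vecMulVec_zero]
  refine ⟨Y * C * ((2⁻¹ : K) • (1 - Q) + Q)ᵀ, ?_⟩
  rw [← transpose_transpose A, ← transpose_mul, transpose_transpose, ← Matrix.mul_assoc,
    ← Matrix.mul_assoc, hY]
  exact sub_transpose_eq_of_add_eq_one hC (sub_add_cancel 1 Q) hQ

theorem forall_skew_exists_transpose_mul_sub_eq_iff [Field K] [NeZero (2 : K)] [Fintype ι]
    [Fintype n] [DecidableEq n] (A : Matrix ι n K) :
    (∀ C : Matrix n n K, Cᵀ = -C → ∃ X : Matrix ι n K, Aᵀ * X - Xᵀ * A = C) ↔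
      Fintype.card n ≤ A.rank + 1 :=
  ⟨A.card_le_rank_add_one_of_forall_skew,
    fun hA _ hC => A.exists_transpose_mul_sub_eq_of_card_le hA hC⟩

end Matrix

theorem surjective_onto_skew_iff_rank_ge_general {h m : ℕ}
    (A : Matrix (Fin h ⊕ Fin h) (Fin m) ℂ) :
    (∀ C : Matrix (Fin m) (Fin m) ℂ, Cᵀ = -C →
      ∃ B : Matrix (Fin h ⊕ Fin h) (Fin m) ℂ,
        Aᵀ * stdSymplectic h * B + Bᵀ * stdSymplectic h * A = C) ↔ m - 1 ≤ A.rank := by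
  simp_rw [exists_transpose_mul_mul_add_eq_iff (stdSymplectic_transpose h)
    (isUnit_stdSymplectic h), forall_skew_exists_transpose_mul_sub_eq_iff, Fintype.card_fin]
  omega

/-- For `n = 2h` even, `Ω` the standard symplectic matrix and `1 ≤ m ≤ n + 1`, the map
`B ↦ AᵀΩB + BᵀΩA` on `n × m` complex matrices is surjective onto the skew-symmetric `m × m`
matrices if and only if `rank A ≥ m - 1`. -/
theorem surjective_onto_skew_iff_rank_ge {h m : ℕ} (hm : 1 ≤ m) (hmn : m ≤ 2 * h + 1)
    (A : Matrix (Fin h ⊕ Fin h) (Fin m) ℂ) :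
    (∀ C : Matrix (Fin m) (Fin m) ℂ, Cᵀ = -C →
      ∃ B : Matrix (Fin h ⊕ Fin h) (Fin m) ℂ,
        Aᵀ * stdSymplectic h * B + Bᵀ * stdSymplectic h * A = C) ↔ m - 1 ≤ A.rank :=
  surjective_onto_skew_iff_rank_ge_general A
end

section
/- Let n be even, let Ω be the standard symplectic n×n matrix with block form [[0, I],[−I, 0]] (I the identity of size n/2), and let 1 ≤ m ≤ n+1. Then every skew-symmetric m×m complex matrix C (Cᵀ = −C) can be written as C = AᵀΩA for some n×m complex matrix A with rank A = rank C. -/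
open Matrix

/-!
A nonzero entry `c = C i j` of a skew-symmetric matrix splits off the rank-two alternating
matrix `u ∧ v` with `u = C eᵢ`, `v = c⁻¹ C eⱼ`. What remains is skew-symmetric, vanishes in rows
`i` and `j`, and has rank two less, since `u` and `v` are independent modulo its range (look at
the coordinates `j` and `i`). As `AᵀΩA = ∑ₜ A (inl t) ∧ A (inr t)`, every split-off `u ∧ v` is one
more symplectic pair of rows of `A`. So `C = AᵀΩᵣA` with `2r = rank C ≤ m ≤ 2h + 1`, whence
`r ≤ h`, and padding `A` with zero rows changes neither `AᵀΩA` nor the rank.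
-/

open Submodule

namespace Matrix

variable {K n : Type*} [Field K]

def wedge (u v : n → K) : Matrix n n K :=
  vecMulVec u v - vecMulVec v u

theorem wedge_swap (u v : n → K) : wedge v u = -wedge u v := by
  simp only [wedge, neg_sub]

theorem transpose_wedge (u v : n → K) : (wedge u v)ᵀ = -wedge u v := by
  simp only [wedge, transpose_sub, transpose_vecMulVec, neg_sub]

theorem apply_eq_neg_of_transpose_eq_neg {C : Matrix n n K} (hC : Cᵀ = -C) (k l : n) :
    C l k = -C k l := by
  simpa using congrFun (congrFun hC k) l

theorem apply_self_eq_zero_of_transpose_eq_neg [CharZero K] {C : Matrix n n K} (hC : Cᵀ = -C)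
    (k : n) : C k k = 0 :=
  self_eq_neg.mp (apply_eq_neg_of_transpose_eq_neg hC k k)

section Fintype

variable [Fintype n]

theorem wedge_mulVec (u v w : n → K) :
    wedge u v *ᵥ w = (v ⬝ᵥ w) • u - (u ⬝ᵥ w) • v := by
  simp only [wedge, sub_mulVec, vecMulVec_mulVec, op_smul_eq_smul]

theorem range_mulVecLin_add_wedge_le (D : Matrix n n K) (u v : n → K) :
    LinearMap.range (D + wedge u v).mulVecLin ≤ LinearMap.range D.mulVecLin ⊔ span K {u, v} := by
  rintro _ ⟨w, rfl⟩
  rw [mulVecLin_apply, add_mulVec, wedge_mulVec]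
  exact add_mem (mem_sup_left ⟨w, rfl⟩) <| mem_sup_right <|
    sub_mem (smul_mem _ _ (subset_span (by simp))) (smul_mem _ _ (subset_span (by simp)))

end Fintype

def skewReduce (C : Matrix n n K) (i j : n) : Matrix n n K :=
  C - wedge (Cᵀ i) ((C i j)⁻¹ • Cᵀ j)

section skewReduce

variable {C : Matrix n n K} {i j : n}

theorem transpose_skewReduce (hC : Cᵀ = -C) : (skewReduce C i j)ᵀ = -skewReduce C i j := by
  rw [skewReduce, transpose_sub, transpose_wedge, hC, neg_sub, sub_neg_eq_add, neg_add_eq_sub]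

variable [CharZero K]

theorem skewReduce_apply_left (hC : Cᵀ = -C) (hc : C i j ≠ 0) (l : n) :
    skewReduce C i j i l = 0 := by
  have hii := apply_self_eq_zero_of_transpose_eq_neg hC i
  have hli := apply_eq_neg_of_transpose_eq_neg hC i l
  simp only [skewReduce, wedge, sub_apply, vecMulVec_apply, transpose_apply, Pi.smul_apply,
    smul_eq_mul]
  field_simp
  linear_combination (C i j) * hli - C l j * hii

theorem skewReduce_apply_right (hC : Cᵀ = -C) (hc : C i j ≠ 0) (l : n) :
    skewReduce C i j j l = 0 := by
  have hjj := apply_self_eq_zero_of_transpose_eq_neg hC j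
  have hji := apply_eq_neg_of_transpose_eq_neg hC i j
  have hlj := apply_eq_neg_of_transpose_eq_neg hC j l
  simp only [skewReduce, wedge, sub_apply, vecMulVec_apply, transpose_apply, Pi.smul_apply,
    smul_eq_mul]
  field_simp
  linear_combination (C i j) * hlj + C l i * hjj - C l j * hji

theorem rank_eq_rank_skewReduce_add_two [Fintype n] (hC : Cᵀ = -C) (hc : C i j ≠ 0) :
    C.rank = (skewReduce C i j).rank + 2 := by
  classical
  set D := skewReduce C i j
  set u := Cᵀ i
  set v := (C i j)⁻¹ • Cᵀ j
  have hu : u ∈ LinearMap.range C.mulVecLin := ⟨Pi.single i 1, mulVec_single_one C i⟩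
  have hv : v ∈ LinearMap.range C.mulVecLin := smul_mem _ _ ⟨Pi.single j 1, mulVec_single_one C j⟩
  have hrange : LinearMap.range C.mulVecLin = LinearMap.range D.mulVecLin ⊔ span K {u, v} := by
    refine le_antisymm ?_ (sup_le ?_ (span_le.2 (by simp [Set.insert_subset_iff, hu, hv])))
    · have hDC : D + wedge u v = C := sub_add_cancel C _
      exact hDC ▸ range_mulVecLin_add_wedge_le D u v
    · have hCD : C + wedge v u = D := by rw [wedge_swap, ← sub_eq_add_neg]; rfl
      refine hCD ▸ (range_mulVecLin_add_wedge_le C v u).trans (sup_le le_rfl ?_)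
      exact span_le.2 (by simp [Set.insert_subset_iff, hu, hv])
  have hD_le_ker (k : n) (hk : ∀ l, D k l = 0) :
      LinearMap.range D.mulVecLin ≤ LinearMap.ker (LinearMap.proj k) := by
    rintro _ ⟨w, rfl⟩
    simp [mulVec, dotProduct, hk]
  have hu_j : u ∉ LinearMap.range D.mulVecLin := fun h => by
    have : u j = 0 := hD_le_ker j (skewReduce_apply_right hC hc) h
    simp [u, apply_eq_neg_of_transpose_eq_neg hC i j, hc] at this
  have hv_i : v ∉ LinearMap.range D.mulVecLin ⊔ span K {u} := fun h => by
    have hu_i : u ∈ LinearMap.ker (LinearMap.proj (R := K) i) :=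
      apply_self_eq_zero_of_transpose_eq_neg hC i
    have : v i = 0 := sup_le (hD_le_ker i (skewReduce_apply_left hC hc))
      ((span_singleton_le_iff_mem _ _).2 hu_i) h
    simp [v, hc] at this
  rw [rank, rank, hrange, span_insert, ← sup_assoc, finrank_sup_span_singleton hv_i,
    finrank_sup_span_singleton hu_j]

end skewReduce

end Matrix

variable {n : Type*}

theorem transpose_mul_stdSymplectic_mul_eq_sum_wedge {r : ℕ} (A : Matrix (Fin r ⊕ Fin r) n ℂ) :
    Aᵀ * stdSymplectic r * A = ∑ t, wedge (A (Sum.inl t)) (A (Sum.inr t)) := by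
  ext k l
  simp [mul_apply, stdSymplectic, Fintype.sum_sum_type, Matrix.sum_apply, wedge, vecMulVec_apply,
    one_apply, sub_eq_neg_add, Finset.sum_add_distrib]

def snocPair {r : ℕ} (A : Matrix (Fin r ⊕ Fin r) n ℂ) (u v : n → ℂ) :
    Matrix (Fin (r + 1) ⊕ Fin (r + 1)) n ℂ :=
  Sum.elim (Fin.snoc (fun t => A (Sum.inl t)) u) (Fin.snoc (fun t => A (Sum.inr t)) v)

theorem transpose_mul_stdSymplectic_mul_snocPair {r : ℕ} (A : Matrix (Fin r ⊕ Fin r) n ℂ)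
    (u v : n → ℂ) :
    (snocPair A u v)ᵀ * stdSymplectic (r + 1) * snocPair A u v
      = Aᵀ * stdSymplectic r * A + wedge u v := by
  rw [transpose_mul_stdSymplectic_mul_eq_sum_wedge, transpose_mul_stdSymplectic_mul_eq_sum_wedge,
    Fin.sum_univ_castSucc]
  simp [snocPair]

theorem exists_transpose_mul_stdSymplectic_mul_eq [Fintype n] (C : Matrix n n ℂ)
    (hC : Cᵀ = -C) :
    ∃ (r : ℕ) (A : Matrix (Fin r ⊕ Fin r) n ℂ),
      Aᵀ * stdSymplectic r * A = C ∧ 2 * r = C.rank := by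
  induction hk : C.rank using Nat.strong_induction_on generalizing C with
  | _ k ih =>
  by_cases hC0 : C = 0
  · exact ⟨0, 0, by simp [hC0], by simp [← hk, hC0]⟩
  obtain ⟨i, j, hc⟩ : ∃ i j, C i j ≠ 0 := by simpa [← Matrix.ext_iff] using hC0
  have hrank := rank_eq_rank_skewReduce_add_two hC hc
  obtain ⟨r, A, hA, hr⟩ := ih _ (by omega) (skewReduce C i j) (transpose_skewReduce hC) rfl
  refine ⟨r + 1, snocPair A (Cᵀ i) ((C i j)⁻¹ • Cᵀ j), ?_, by omega⟩
  rw [transpose_mul_stdSymplectic_mul_snocPair, hA, skewReduce, sub_add_cancel]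

theorem exists_transpose_mul_stdSymplectic_mul_eq_of_le [Fintype n] {r h : ℕ} (hrh : r ≤ h)
    (A : Matrix (Fin r ⊕ Fin r) n ℂ) :
    ∃ B : Matrix (Fin h ⊕ Fin h) n ℂ,
      Bᵀ * stdSymplectic h * B = Aᵀ * stdSymplectic r * A ∧ B.rank = A.rank := by
  obtain ⟨E₀, hE₀⟩ : ∃ E₀ : Matrix (Fin h) (Fin r) ℂ, E₀ᵀ * E₀ = 1 :=
    ⟨(1 : Matrix (Fin h) (Fin h) ℂ).submatrix id (Fin.castLE hrh), by
      rw [transpose_submatrix, transpose_one, ← submatrix_mul _ _ _ _ _ Function.bijective_id,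
        Matrix.one_mul, submatrix_one _ (Fin.castLE_injective hrh)]⟩
  obtain ⟨E, hE, hEΩ⟩ : ∃ E : Matrix (Fin h ⊕ Fin h) (Fin r ⊕ Fin r) ℂ,
      Eᵀ * E = 1 ∧ Eᵀ * stdSymplectic h * E = stdSymplectic r := by
    refine ⟨fromBlocks E₀ 0 0 E₀, ?_, ?_⟩
    · rw [fromBlocks_transpose, fromBlocks_multiply]
      simp [hE₀]
    · rw [stdSymplectic, stdSymplectic, fromBlocks_transpose, fromBlocks_multiply,
        fromBlocks_multiply]
      simp [hE₀]
  refine ⟨E * A, ?_, le_antisymm (rank_mul_le_right E A) ?_⟩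
  · calc (E * A)ᵀ * stdSymplectic h * (E * A) = Aᵀ * (Eᵀ * stdSymplectic h * E) * A := by
          simp only [transpose_mul, Matrix.mul_assoc]
      _ = Aᵀ * stdSymplectic r * A := by rw [hEΩ]
  · calc A.rank = (Eᵀ * (E * A)).rank := by rw [← Matrix.mul_assoc, hE, Matrix.one_mul]
      _ ≤ (E * A).rank := rank_mul_le_right _ _

theorem skew_eq_transpose_symplectic_mul_general {h m : ℕ} (hmn : m ≤ 2 * h + 1)
    (C : Matrix (Fin m) (Fin m) ℂ) (hC : Cᵀ = -C) :
    ∃ A : Matrix (Fin h ⊕ Fin h) (Fin m) ℂ,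
      Aᵀ * stdSymplectic h * A = C ∧ A.rank = C.rank := by
  obtain ⟨r, A, hA, hr⟩ := exists_transpose_mul_stdSymplectic_mul_eq C hC
  have hrh : r ≤ h := by have := C.rank_le_width; omega
  obtain ⟨B, hB, hBA⟩ := exists_transpose_mul_stdSymplectic_mul_eq_of_le hrh A
  refine ⟨B, hB.trans hA, hBA.trans (le_antisymm ?_ ?_)⟩
  · simpa [← hr, two_mul] using A.rank_le_card_height
  · exact hA ▸ rank_mul_le_right _ _

/-- For `n = 2h` even, `Ω` the standard symplectic matrix and `1 ≤ m ≤ n + 1`, every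
skew-symmetric `m × m` complex matrix `C` can be written as `C = AᵀΩA` for some `n × m`
matrix `A` with `rank A = rank C`. -/
theorem skew_eq_transpose_symplectic_mul {h m : ℕ} (hm : 1 ≤ m) (hmn : m ≤ 2 * h + 1)
    (C : Matrix (Fin m) (Fin m) ℂ) (hC : Cᵀ = -C) :
    ∃ A : Matrix (Fin h ⊕ Fin h) (Fin m) ℂ,
      Aᵀ * stdSymplectic h * A = C ∧ A.rank = C.rank :=
  skew_eq_transpose_symplectic_mul_general hmn C hC
end

section
/- Let R be a commutative ring and I ⊆ R an ideal admitting an exact sequence 0 → P → Q → R → R/I → 0 of R-modules in which P and Q are finitely generated free R-modules and the map Q → R has image I. Let A be a commutative Noetherian R-algebra and set J = I·A, the ideal of A generated by the image of I. If there exist elements a, b ∈ J such that (a, b) is an A-regular sequence (a is a non-zero-divisor on A and b is a non-zero-divisor on A/aA), then the base-changed sequence 0 → A ⊗_R P → A ⊗_R Q → A → A/J → 0 is exact; in particular the map A ⊗_R P → A ⊗_R Q is injective and the image of A ⊗_R Q → A is J. -/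
/-!
For `i = g q₀ ∈ I` the map `q ↦ i • q - g q • q₀` lands in `ker g = range f`; lifting it through
`f` gives `s : Q → P` which is a null-homotopy of multiplication by `i` on `0 → P → Q → R`.
Null-homotopies survive base change, so `J = I·A` annihilates the homology of
`0 → A ⊗ P → A ⊗ Q → A`. As `A ⊗ P` and `A ⊗ Q` are flat over `A`, the sequence `(a, b)` stays
regular on them. Then `a` kills the kernel of `A ⊗ P → A ⊗ Q`, so it is zero; and if `x` is a cycle
in `A ⊗ Q` with `a • x = f y`, `b • x = f z`, then `b • y = a • z`, so `y = a • w` by regularity of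
`b` modulo `a`, and `x = f w`.
-/

open TensorProduct Pointwise RingTheory.Sequence

section BaseChange

variable {R P Q : Type*} [CommRing R] [AddCommGroup P] [Module R P] [AddCommGroup Q] [Module R Q]
  {f : P →ₗ[R] Q} {g : Q →ₗ[R] R}

lemma Function.Exact.exists_homotopy_smul_id (hf : Function.Injective f)
    (hfg : Function.Exact f g) (q₀ : Q) :
    ∃ s : Q →ₗ[R] P, s ∘ₗ f = g q₀ • LinearMap.id ∧
      f ∘ₗ s = g q₀ • LinearMap.id - LinearMap.toSpanSingleton R Q q₀ ∘ₗ g := by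
  let φ := g q₀ • LinearMap.id - LinearMap.toSpanSingleton R Q q₀ ∘ₗ g
  have hφ : ∀ q, φ q ∈ LinearMap.range f := fun q => by
    rw [← LinearMap.exact_iff.mp hfg]
    simp [φ, mul_comm]
  let s := (LinearEquiv.ofInjective f hf).symm.toLinearMap ∘ₗ φ.codRestrict _ hφ
  have hfs : f ∘ₗ s = φ := by ext q; simp [s]
  refine ⟨s, ?_, hfs⟩
  ext p
  apply hf
  simpa [φ, hfg.apply_apply_eq_zero] using LinearMap.congr_fun hfs (f p)

variable {A : Type*} [CommRing A] [Algebra R A]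

lemma Submodule.smul_mem_of_mem_map_algebraMap {M : Type*} [AddCommGroup M] [Module A M]
    {I : Ideal R} {N : Submodule A M} {x : M} (h : ∀ i ∈ I, algebraMap R A i • x ∈ N) {c : A}
    (hc : c ∈ I.map (algebraMap R A)) : c • x ∈ N := by
  have : I.map (algebraMap R A) ≤ N.colon {x} :=
    Ideal.map_le_iff_le_comap.mpr fun i hi => N.mem_colon_singleton.mpr (h i hi)
  exact N.mem_colon_singleton.mp (this hc)

lemma Function.Exact.smul_eq_zero_of_baseChange_eq_zero (hf : Function.Injective f)
    (hfg : Function.Exact f g) {c : A} (hc : c ∈ Ideal.map (algebraMap R A) (LinearMap.range g))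
    {x : A ⊗[R] P} (hx : f.baseChange A x = 0) : c • x = 0 := by
  refine (Submodule.mem_bot A).mp (Submodule.smul_mem_of_mem_map_algebraMap ?_ hc)
  rintro _ ⟨q₀, rfl⟩
  obtain ⟨s, hsf, -⟩ := hfg.exists_homotopy_smul_id hf q₀
  have := LinearMap.congr_fun (congrArg (LinearMap.baseChange A) hsf) x
  simp only [LinearMap.baseChange_comp, LinearMap.baseChange_smul, LinearMap.baseChange_id,
    LinearMap.comp_apply, LinearMap.smul_apply, LinearMap.id_apply, hx, map_zero] at this
  rw [Submodule.mem_bot, algebraMap_smul, ← this]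

lemma Function.Exact.smul_mem_range_baseChange_of_baseChange_eq_zero (hf : Function.Injective f)
    (hfg : Function.Exact f g) {c : A} (hc : c ∈ Ideal.map (algebraMap R A) (LinearMap.range g))
    {x : A ⊗[R] Q} (hx : g.baseChange A x = 0) : c • x ∈ LinearMap.range (f.baseChange A) := by
  refine Submodule.smul_mem_of_mem_map_algebraMap ?_ hc
  rintro _ ⟨q₀, rfl⟩
  obtain ⟨s, -, hfs⟩ := hfg.exists_homotopy_smul_id hf q₀
  have := LinearMap.congr_fun (congrArg (LinearMap.baseChange A) hfs) x
  simp only [LinearMap.baseChange_comp, LinearMap.baseChange_sub, LinearMap.baseChange_smul,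
    LinearMap.baseChange_id, LinearMap.comp_apply, LinearMap.sub_apply, LinearMap.smul_apply,
    LinearMap.id_apply, hx, map_zero, sub_zero] at this
  exact ⟨s.baseChange A x, by rw [this, algebraMap_smul]⟩

variable (A) in
lemma LinearMap.range_rid_comp_baseChange :
    LinearMap.range ((AlgebraTensorModule.rid R A A).toLinearMap ∘ₗ g.baseChange A) =
      Ideal.map (algebraMap R A) (LinearMap.range g) := by
  apply le_antisymm
  · rintro _ ⟨x, rfl⟩
    induction x using TensorProduct.induction_on with
    | zero => simp
    | tmul c q =>
      simpa [Algebra.smul_def] using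
        Ideal.mul_mem_right c _ (Ideal.mem_map_of_mem _ (LinearMap.mem_range_self g q))
    | add u v hu hv => simpa using add_mem hu hv
  · refine Ideal.map_le_iff_le_comap.mpr ?_
    rintro _ ⟨q, rfl⟩
    exact ⟨1 ⊗ₜ q, by simp [Algebra.smul_def]⟩

end BaseChange

section Depth

variable {A M N L : Type*} [CommRing A] [AddCommGroup M] [Module A M] [AddCommGroup N]
  [Module A N] [AddCommGroup L] [Module A L]

variable (M) in
lemma isWeaklyRegular_of_flat [Module.Flat A M] {rs : List A} (h : IsWeaklyRegular A rs) : IsWeaklyRegular M rs :=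
  ((TensorProduct.lid A M).isWeaklyRegular_congr rs).mp h.isWeaklyRegular_rTensor

lemma exists_eq_smul_of_smul_eq_smul {a b : A} (hb : IsSMulRegular (QuotSMulTop a M) b)
    {y z : M} (h : b • y = a • z) : ∃ w, y = a • w := by
  have hy : (Submodule.Quotient.mk y : QuotSMulTop a M) = 0 := by
    refine hb.right_eq_zero_of_smul ?_
    rw [← Submodule.Quotient.mk_smul, h, Submodule.Quotient.mk_eq_zero]
    exact Submodule.smul_mem_pointwise_smul z a ⊤ trivial
  obtain ⟨w, -, hw⟩ := (Submodule.mem_smul_pointwise_iff_exists _ _ _).mp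
    ((Submodule.Quotient.mk_eq_zero _).mp hy)
  exact ⟨w, hw.symm⟩

lemma LinearMap.injective_of_smul_ker_eq_zero {φ : M →ₗ[A] N} {a : A} (ha : IsSMulRegular M a)
    (h : ∀ x, φ x = 0 → a • x = 0) : Function.Injective φ :=
  (injective_iff_map_eq_zero φ).mpr fun x hx => ha.right_eq_zero_of_smul (h x hx)

lemma LinearMap.exact_of_smul_ker_mem_range {φ : M →ₗ[A] N} {ψ : N →ₗ[A] L} {a b : A}
    (hφ : Function.Injective φ) (hψφ : ψ ∘ₗ φ = 0) (ha : IsSMulRegular N a)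
    (hb : IsSMulRegular (QuotSMulTop a M) b)
    (h : ∀ x, ψ x = 0 → a • x ∈ LinearMap.range φ ∧ b • x ∈ LinearMap.range φ) :
    Function.Exact φ ψ := by
  refine LinearMap.exact_of_comp_of_mem_range hψφ fun x hx => ?_
  obtain ⟨⟨y, hy⟩, ⟨z, hz⟩⟩ := h x hx
  have hyz : b • y = a • z := hφ (by rw [map_smul, map_smul, hy, hz, smul_comm])
  obtain ⟨w, rfl⟩ := exists_eq_smul_of_smul_eq_smul hb hyz
  exact ⟨w, ha (by simpa using hy)⟩

end Depth

theorem baseChange_resolution_exact_of_regular_sequence_general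
    {R : Type*} [CommRing R] (I : Ideal R)
    {P Q : Type*} [AddCommGroup P] [Module R P] [AddCommGroup Q] [Module R Q]
    [Module.Free R P] [Module.Free R Q]
    (f : P →ₗ[R] Q) (g : Q →ₗ[R] R)
    (hf : Function.Injective f)
    (hfg : Function.Exact f g)
    (hg : LinearMap.range g = I)
    (A : Type*) [CommRing A] [Algebra R A]
    (hreg : ∃ a b : A, a ∈ I.map (algebraMap R A) ∧ b ∈ I.map (algebraMap R A) ∧
      RingTheory.Sequence.IsRegular A [a, b]) :
    Function.Injective (f.baseChange A) ∧
    Function.Exact (f.baseChange A) (g.baseChange A) ∧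
    LinearMap.range ((TensorProduct.AlgebraTensorModule.rid R A A).toLinearMap ∘ₗ
      g.baseChange A) = I.map (algebraMap R A) := by
  subst hg
  obtain ⟨a, b, ha, hb, hreg⟩ := hreg
  obtain ⟨haP, hbP⟩ := (isWeaklyRegular_cons_iff _ _ _).mp <|
    isWeaklyRegular_of_flat (A ⊗[R] P) hreg.toIsWeaklyRegular
  replace hbP := ((isWeaklyRegular_cons_iff _ _ _).mp hbP).1
  obtain ⟨haQ, -⟩ := (isWeaklyRegular_cons_iff _ _ _).mp <|
    isWeaklyRegular_of_flat (A ⊗[R] Q) hreg.toIsWeaklyRegular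
  have hinj : Function.Injective (f.baseChange A) :=
    LinearMap.injective_of_smul_ker_eq_zero haP fun _ hx =>
      hfg.smul_eq_zero_of_baseChange_eq_zero hf ha hx
  have hcomp : g.baseChange A ∘ₗ f.baseChange A = 0 := by
    rw [← LinearMap.baseChange_comp, hfg.linearMap_comp_eq_zero, LinearMap.baseChange_zero]
  refine ⟨hinj, LinearMap.exact_of_smul_ker_mem_range hinj hcomp haQ hbP fun _ hx => ⟨?_, ?_⟩,
    LinearMap.range_rid_comp_baseChange A⟩
  · exact hfg.smul_mem_range_baseChange_of_baseChange_eq_zero hf ha hx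
  · exact hfg.smul_mem_range_baseChange_of_baseChange_eq_zero hf hb hx

/-- Let `0 → P → Q → R → R/I → 0` be an exact sequence of `R`-modules with `P`, `Q` finitely
generated free, and let `A` be a Noetherian commutative `R`-algebra with `J = I·A`.  If `J`
contains an `A`-regular sequence of length two, then the base-changed sequence
`0 → A ⊗ P → A ⊗ Q → A → A/J → 0` is exact: `A ⊗ P → A ⊗ Q` is injective, the sequence is
exact at `A ⊗ Q`, and the image of `A ⊗ Q → A` is `J`. -/
theorem baseChange_resolution_exact_of_regular_sequence
    {R : Type*} [CommRing R] (I : Ideal R)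
    {P Q : Type*} [AddCommGroup P] [Module R P] [AddCommGroup Q] [Module R Q]
    [Module.Free R P] [Module.Finite R P] [Module.Free R Q] [Module.Finite R Q]
    (f : P →ₗ[R] Q) (g : Q →ₗ[R] R)
    (hf : Function.Injective f)
    (hfg : Function.Exact f g)
    (hg : LinearMap.range g = I)
    (A : Type*) [CommRing A] [Algebra R A] [IsNoetherianRing A]
    (hreg : ∃ a b : A, a ∈ I.map (algebraMap R A) ∧ b ∈ I.map (algebraMap R A) ∧
      RingTheory.Sequence.IsRegular A [a, b]) :
    Function.Injective (f.baseChange A) ∧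
    Function.Exact (f.baseChange A) (g.baseChange A) ∧
    LinearMap.range ((TensorProduct.AlgebraTensorModule.rid R A A).toLinearMap ∘ₗ
      g.baseChange A) = I.map (algebraMap R A) :=
  baseChange_resolution_exact_of_regular_sequence_general I f g hf hfg hg A hreg
end

section
/- Let n ≥ 1, let R be the polynomial ring over ℂ in n+1 variables x₁, …, x_{n+1}, and let φ₁, …, φ_n ∈ R. Let Jac(φ) be the n×(n+1) Jacobian matrix with (k,i) entry ∂φ_k/∂x_i, for 1 ≤ i ≤ n+1 let d_i be the determinant of the n×n matrix obtained from Jac(φ) by deleting column i, and let η = ∑_{i=1}^{n+1} (−1)^i d_i ∂/∂x_i ∈ Derivation ℂ R R. If the ideal of R generated by all n×n minors of Jac(φ) has height at least 2, then the R-module {D ∈ Derivation ℂ R R : D φ_k = 0 for all k = 1, …, n} of vertical derivations is free of rank 1 with generator η. -/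
open MvPolynomial

noncomputable section

/-- The height of an ideal: the infimum of the heights of the prime ideals containing it. -/
def idealHeight {R : Type*} [CommRing R] (I : Ideal R) : ℕ∞ :=
  ⨅ (p : PrimeSpectrum R) (_ : I ≤ p.asIdeal), Order.height p

/-- The `n × (n+1)` Jacobian matrix of `φ₁, …, φ_n ∈ ℂ[x₁,…,x_{n+1}]`, with `(k, i)` entry
`∂φ_k/∂x_i`. -/
def jacMatrix {n : ℕ} (φ : Fin n → MvPolynomial (Fin (n + 1)) ℂ) :
    Matrix (Fin n) (Fin (n + 1)) (MvPolynomial (Fin (n + 1)) ℂ) :=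
  Matrix.of fun k i => MvPolynomial.pderiv i (φ k)

/-- `d_i`: the determinant of the Jacobian matrix of `φ` with column `i` deleted. -/
def jacMinor {n : ℕ} (φ : Fin n → MvPolynomial (Fin (n + 1)) ℂ) (i : Fin (n + 1)) :
    MvPolynomial (Fin (n + 1)) ℂ :=
  ((jacMatrix φ).submatrix id i.succAbove).det

/-- The derivation `η = ∑ i, (-1)^i d_i ∂/∂x_i` (with `i` counted starting from `1`, i.e.
`η (x_i) = (-1)^(i+1) d_i` for `i : Fin (n+1)`). -/
def etaDerivation {n : ℕ} (φ : Fin n → MvPolynomial (Fin (n + 1)) ℂ) :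
    Derivation ℂ (MvPolynomial (Fin (n + 1)) ℂ) (MvPolynomial (Fin (n + 1)) ℂ) :=
  MvPolynomial.mkDerivation ℂ fun i => (-1) ^ ((i : ℕ) + 1) * jacMinor φ i

/-- The `ℂ[x₁,…,x_{n+1}]`-module of vertical derivations: those annihilating every `φ_k`. -/
def vertDerivations {n : ℕ} (φ : Fin n → MvPolynomial (Fin (n + 1)) ℂ) :
    Submodule (MvPolynomial (Fin (n + 1)) ℂ)
      (Derivation ℂ (MvPolynomial (Fin (n + 1)) ℂ) (MvPolynomial (Fin (n + 1)) ℂ)) where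
  carrier := {D | ∀ k, D (φ k) = 0}
  add_mem' := fun ha hb k => by rw [Derivation.add_apply, ha k, hb k, add_zero]
  zero_mem' := fun k => by rw [Derivation.zero_apply]
  smul_mem' := fun r D hD k => by rw [Derivation.smul_apply, hD k, smul_zero]

/-!
Bordering the Jacobian `A` by a row `u` gives a square matrix of determinant `u ⬝ᵥ m`, where `m`
is the vector of signed maximal minors; hence `A m = 0`, and Cramer's rule for `A` bordered by
`e_j` gives `m_j a = a_j m` for every `a ∈ ker A`. A vertical derivation `D` is exactly such a
kernel vector `a = (D x_i)`, and `η` corresponds to `-m`. Height `≥ 2` says that the minors are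
not all zero and lie in no principal prime ideal (Krull's principal ideal theorem), so in the
factorial ring `R` they have no common prime factor. Then `m_{i₀} ∣ a_{i₀} m_i` for all `i`
forces `m_{i₀} ∣ a_{i₀}`, so `a` is an `R`-multiple of `m`.
-/

theorem derivation_apply_eq_sum_mul_pderiv {R σ : Type*} [CommSemiring R] [Fintype σ]
    (D : Derivation R (MvPolynomial σ R) (MvPolynomial σ R)) (p : MvPolynomial σ R) :
    D p = ∑ i, D (X i) * pderiv i p := by
  classical
  have hsum : ∀ q, (∑ i, D (X i) • pderiv i) q = ∑ i, D (X i) * pderiv i q := fun q => by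
    rw [← Derivation.coeFnAddMonoidHom_apply, map_sum]
    simp
  have hD : D = ∑ i, D (X i) • pderiv i :=
    derivation_ext fun j => by simp [hsum, pderiv_X, Pi.single_apply]
  rw [← hsum, ← hD]

theorem idealHeight_le_height {R : Type*} [CommRing R] {I P : Ideal R} [hP : P.IsPrime]
    (h : I ≤ P) : idealHeight I ≤ P.height :=
  (iInf₂_le (⟨P, hP⟩ : PrimeSpectrum R) h).trans_eq
    (PrimeSpectrum.height_eq_orderHeight ⟨P, hP⟩).symm

theorem exists_ne_zero_of_two_le_idealHeight {R : Type*} [CommRing R] [IsDomain R] {ι : Type*}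
    {d : ι → R} (h : 2 ≤ idealHeight (Ideal.span (Set.range d))) : ∃ i, d i ≠ 0 := by
  by_contra! hd
  have hle : Ideal.span (Set.range d) ≤ ⊥ := by
    rw [Ideal.span_le]
    rintro _ ⟨i, rfl⟩
    simp [hd i]
  have := h.trans (idealHeight_le_height hle)
  rw [Ideal.height_bot] at this
  exact absurd this (by decide)

theorem exists_not_dvd_of_two_le_idealHeight {R : Type*} [CommRing R] [IsNoetherianRing R]
    {ι : Type*} {d : ι → R} (h : 2 ≤ idealHeight (Ideal.span (Set.range d))) {p : R}
    (hp : Prime p) : ∃ i, ¬ p ∣ d i := by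
  by_contra! hd
  have : (Ideal.span {p}).IsPrime := (Ideal.span_singleton_prime hp.ne_zero).mpr hp
  have hle : Ideal.span (Set.range d) ≤ Ideal.span {p} := by
    rw [Ideal.span_le]
    rintro _ ⟨i, rfl⟩
    exact Ideal.mem_span_singleton.mpr (hd i)
  have hKrull := Ideal.height_le_one_of_isPrincipal_of_mem_minimalPrimes (Ideal.span {p})
    (Ideal.span {p}) (by rw [Ideal.minimalPrimes_eq_subsingleton_self]; rfl)
  exact absurd (h.trans ((idealHeight_le_height hle).trans hKrull)) (by decide)

namespace Matrix

variable {R : Type*} [CommRing R] {n : ℕ} (A : Matrix (Fin n) (Fin (n + 1)) R)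

def signedMinors (i : Fin (n + 1)) : R := (-1) ^ (i : ℕ) * (A.submatrix id i.succAbove).det

theorem det_of_vecCons_eq_dotProduct_signedMinors (u : Fin (n + 1) → R) :
    (of (vecCons u A)).det = u ⬝ᵥ A.signedMinors := by
  rw [det_succ_row_zero]
  refine Finset.sum_congr rfl fun i _ => ?_
  change _ * u i * (A.submatrix id i.succAbove).det = u i * ((-1) ^ (i : ℕ) * _)
  ring

theorem mulVec_signedMinors : A *ᵥ A.signedMinors = 0 := by
  funext k
  rw [mulVec, ← det_of_vecCons_eq_dotProduct_signedMinors, Pi.zero_apply]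
  exact det_zero_of_row_eq (Fin.succ_ne_zero k).symm rfl

theorem signedMinors_smul_eq_smul_signedMinors {a : Fin (n + 1) → R} (ha : A *ᵥ a = 0)
    (j : Fin (n + 1)) : A.signedMinors j • a = a j • A.signedMinors := by
  -- Bordering `A` by the row `e_j` gives `B` with `B a = a_j e_0`, `det B = m_j`, and the
  -- signed minors `m` as column `0` of `adj B`; now apply `adj B * B = det B`.
  set B := of (vecCons (Pi.single j 1) A)
  have hdet : B.det = A.signedMinors j := by
    rw [det_of_vecCons_eq_dotProduct_signedMinors, single_dotProduct, one_mul]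
  have hBa : B *ᵥ a = Pi.single 0 (a j) := by
    funext i
    cases i using Fin.cases with
    | zero => exact (single_dotProduct ..).trans (one_mul _)
    | succ k => exact congrFun ha k
  have hadj : ∀ i, B.adjugate i 0 = A.signedMinors i := by
    intro i
    have h := det_of_vecCons_eq_dotProduct_signedMinors A (Pi.single i 1)
    rw [single_dotProduct, one_mul] at h
    rw [adjugate_apply, ← h]
    congr 1
    funext r c
    cases r using Fin.cases with
    | zero => simp [B]
    | succ k => rfl
  calc A.signedMinors j • a = B.adjugate *ᵥ (B *ᵥ a) := by
        rw [mulVec_mulVec, adjugate_mul, smul_mulVec, one_mulVec, hdet]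
    _ = a j • A.signedMinors := by
        funext i
        rw [hBa, mulVec, dotProduct_single, hadj, Pi.smul_apply, smul_eq_mul, mul_comm]

end Matrix

theorem dvd_of_forall_dvd_mul {R : Type*} [CommRing R] [IsDomain R]
    [UniqueFactorizationMonoid R] {ι : Type*} {v : ι → R}
    (hv : ∀ p : R, Prime p → ∃ i, ¬ p ∣ v i) {i₀ : ι} (hi₀ : v i₀ ≠ 0) {g b : R}
    (h : ∀ i, g ∣ b * v i) : g ∣ b := by
  induction g using UniqueFactorizationMonoid.induction_on_prime generalizing b with
  | h₁ => simpa [hi₀] using h i₀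
  | h₂ u hu => exact hu.dvd
  | h₃ g p _ hp ih =>
    obtain ⟨i, hi⟩ := hv p hp
    obtain ⟨c, rfl⟩ := (hp.dvd_mul.mp (dvd_of_mul_right_dvd (h i))).resolve_right hi
    refine mul_dvd_mul_left p (ih fun j => ?_)
    rw [← mul_dvd_mul_iff_left hp.ne_zero, ← mul_assoc]
    exact h j

theorem exists_eq_smul_of_smul_eq_smul_s16 {R : Type*} [CommRing R] [IsDomain R]
    [UniqueFactorizationMonoid R] {ι : Type*} {v a : ι → R}
    (hv : ∀ p : R, Prime p → ∃ i, ¬ p ∣ v i) {i₀ : ι} (hi₀ : v i₀ ≠ 0)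
    (h : v i₀ • a = a i₀ • v) : ∃ c : R, a = c • v := by
  have hi : ∀ i, v i₀ * a i = a i₀ * v i := congrFun h
  obtain ⟨c, hc⟩ := dvd_of_forall_dvd_mul hv hi₀ fun i => ⟨a i, (hi i).symm⟩
  refine ⟨c, funext fun i => mul_left_cancel₀ hi₀ ?_⟩
  rw [hi, hc, Pi.smul_apply, smul_eq_mul]
  ring

open Matrix

section vertical

variable {n : ℕ} (φ : Fin n → MvPolynomial (Fin (n + 1)) ℂ)

local notation "𝒫" => MvPolynomial (Fin (n + 1)) ℂ

theorem mem_vertDerivations_iff {D : Derivation ℂ 𝒫 𝒫} :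
    D ∈ vertDerivations φ ↔ jacMatrix φ *ᵥ (fun i => D (X i)) = 0 := by
  refine (forall_congr' fun k => ?_).trans funext_iff.symm
  simp only [derivation_apply_eq_sum_mul_pderiv D (φ k), mulVec, dotProduct, jacMatrix, of_apply,
    Pi.zero_apply, mul_comm]

theorem etaDerivation_X (i : Fin (n + 1)) :
    etaDerivation φ (X i) = -(jacMatrix φ).signedMinors i := by
  rw [etaDerivation, mkDerivation_X, signedMinors, jacMinor, pow_succ]
  ring

theorem etaDerivation_mem_vertDerivations : etaDerivation φ ∈ vertDerivations φ := by
  rw [mem_vertDerivations_iff]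
  simp only [etaDerivation_X]
  rw [show (fun i => -(jacMatrix φ).signedMinors i) = -(jacMatrix φ).signedMinors from rfl,
    mulVec_neg, mulVec_signedMinors, neg_zero]

variable {φ}

theorem exists_eq_smul_etaDerivation
    (hcoprime : ∀ p, Prime p → ∃ i, ¬ p ∣ jacMinor φ i) {i₀ : Fin (n + 1)}
    (hi₀ : jacMinor φ i₀ ≠ 0) {D : Derivation ℂ 𝒫 𝒫} (hD : D ∈ vertDerivations φ) : ∃ c : 𝒫, D = c • etaDerivation φ := by
  set w := fun i => etaDerivation φ (X i)
  have hw : ∀ i, w i = (-1) ^ ((i : ℕ) + 1) * jacMinor φ i := fun i => mkDerivation_X _ _ _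
  have hunit : ∀ i : Fin (n + 1), IsUnit ((-1 : 𝒫) ^ ((i : ℕ) + 1)) :=
    fun _ => isUnit_neg_one.pow _
  have hwcoprime : ∀ p, Prime p → ∃ i, ¬ p ∣ w i := fun p hp => by
    simpa only [hw, (hunit _).dvd_mul_left] using hcoprime p hp
  have hwi₀ : w i₀ ≠ 0 := by rw [hw]; exact mul_ne_zero (hunit i₀).ne_zero hi₀
  have hrel : w i₀ • (fun i => D (X i)) = D (X i₀) • w := by
    have := signedMinors_smul_eq_smul_signedMinors _ ((mem_vertDerivations_iff φ).mp hD) i₀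
    simp only [w, etaDerivation_X]
    rw [neg_smul, this]
    exact (smul_neg _ _).symm
  obtain ⟨c, hc⟩ := exists_eq_smul_of_smul_eq_smul_s16 hwcoprime hwi₀ hrel
  exact ⟨c, derivation_ext fun i => congrFun hc i⟩

theorem smul_etaDerivation_injective {i₀ : Fin (n + 1)} (hi₀ : jacMinor φ i₀ ≠ 0) :
    Function.Injective fun c : 𝒫 => c • etaDerivation φ := by
  intro c d h
  have h := congrArg (fun D : Derivation ℂ 𝒫 𝒫 => D (X i₀)) h
  simp only [Derivation.smul_apply, etaDerivation, mkDerivation_X, smul_eq_mul] at h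
  exact mul_right_cancel₀ (mul_ne_zero (isUnit_neg_one.pow _).ne_zero hi₀) h

end vertical

theorem vertDerivations_free_rank_one_general {n : ℕ}
    (φ : Fin n → MvPolynomial (Fin (n + 1)) ℂ)
    (hht : 2 ≤ idealHeight (Ideal.span (Set.range (jacMinor φ)))) :
    ∃ b : Module.Basis (Fin 1) (MvPolynomial (Fin (n + 1)) ℂ) (vertDerivations φ),
      (b 0 : Derivation ℂ (MvPolynomial (Fin (n + 1)) ℂ) (MvPolynomial (Fin (n + 1)) ℂ)) =
        etaDerivation φ := by
  obtain ⟨i₀, hi₀⟩ := exists_ne_zero_of_two_le_idealHeight hht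
  let η : vertDerivations φ := ⟨etaDerivation φ, etaDerivation_mem_vertDerivations φ⟩
  have hli : LinearIndependent (MvPolynomial (Fin (n + 1)) ℂ) fun _ : Fin 1 => η := by
    refine Fintype.linearIndependent_iffₛ.mpr fun f g hfg i => ?_
    simp only [Fin.sum_univ_one] at hfg
    rw [Subsingleton.elim i 0]
    exact smul_etaDerivation_injective hi₀ (congrArg Subtype.val hfg)
  have hspan :
      ⊤ ≤ Submodule.span (MvPolynomial (Fin (n + 1)) ℂ) (Set.range fun _ : Fin 1 => η) := by
    rintro ⟨D, hD⟩ -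
    obtain ⟨c, rfl⟩ := exists_eq_smul_etaDerivation
      (fun _ => exists_not_dvd_of_two_le_idealHeight hht) hi₀ hD
    rw [Set.range_const, Submodule.mem_span_singleton]
    exact ⟨c, rfl⟩
  exact ⟨Module.Basis.mk hli hspan, by rw [Module.Basis.mk_apply]⟩

/-- If the ideal generated by the maximal minors of the Jacobian matrix of
`φ : ℂ^{n+1} → ℂ^n` has height at least `2`, then the module of vertical derivations is free
of rank `1`, generated by `η = ∑ i, (-1)^i d_i ∂/∂x_i`. -/
theorem vertDerivations_free_rank_one {n : ℕ} (hn : 1 ≤ n)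
    (φ : Fin n → MvPolynomial (Fin (n + 1)) ℂ)
    (hht : 2 ≤ idealHeight (Ideal.span (Set.range (jacMinor φ)))) :
    ∃ b : Module.Basis (Fin 1) (MvPolynomial (Fin (n + 1)) ℂ) (vertDerivations φ),
      (b 0 : Derivation ℂ (MvPolynomial (Fin (n + 1)) ℂ) (MvPolynomial (Fin (n + 1)) ℂ)) =
        etaDerivation φ :=
  vertDerivations_free_rank_one_general φ hht

end
end
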